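/- arXiv:1412.6839 — 6 statements merged into one kernel-verified Lean document; each statement's English description precedes it below -/
import Mathlib

section
/- Let {G_n} be a positive linear recurrence sequence with recurrence G_{n+1} = c_1 G_n + c_2 G_{n-1} + ... + c_L G_{n+1-L}, and let H_n denote the number of super-legal decompositions using only the terms G_1, G_2, ..., G_n. Then H_{n+1} = c_1 H_n + c_2 H_{n-1} + ... + c_L H_{n+1-L}. -/
open Finset Filter Asymptotics

open scoped Classical

/-- Super-legal coefficient tuples `(a 1, ..., a n)` with respect to the coefficients
`c 1, ..., c L` of a positive linear recurrence: there is `s ∈ {1, ..., L}` with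
`a 1 = c 1, ..., a (s-1) = c (s-1)`, `a s < c s`, followed by `z ≥ 0` zeros, and the
remaining coefficients are either empty (`lastBlock`) or again super-legal (`consBlock`). -/
inductive IsSuperLegal (L : ℕ) (c : ℕ → ℕ) : List ℕ → Prop
  | lastBlock (s : ℕ) (h1 : 1 ≤ s) (h2 : s ≤ L) (b : ℕ) (hb : b < c s) (z : ℕ) :
      IsSuperLegal L c ((List.range' 1 (s - 1)).map c ++ b :: List.replicate z 0)
  | consBlock (s : ℕ) (h1 : 1 ≤ s) (h2 : s ≤ L) (b : ℕ) (hb : b < c s) (z : ℕ)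
      (rest : List ℕ) (hrest : IsSuperLegal L c rest) :
      IsSuperLegal L c ((List.range' 1 (s - 1)).map c ++ b :: (List.replicate z 0 ++ rest))

/-- `numSuperLegal L c n` is `H n`, the number of super-legal coefficient tuples
`(a 1, ..., a n)`, i.e., the number of super-legal decompositions using only
`G 1, ..., G n`. -/
noncomputable def numSuperLegal (L : ℕ) (c : ℕ → ℕ) (n : ℕ) : ℕ :=
  Nat.card {q : List ℕ // q.length = n ∧ IsSuperLegal L c q}

/-- A nonempty all-zero list is super-legal (using `s = 1`, `b = 0 < c 1`). -/
lemma sl_zeros {L : ℕ} {c : ℕ → ℕ} (hL : 1 ≤ L) (hc1 : 1 ≤ c 1) {m : ℕ} (hm : 1 ≤ m) :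
    IsSuperLegal L c (List.replicate m 0) := by
  obtain ⟨z, rfl⟩ : ∃ z, m = z + 1 := ⟨m - 1, by omega⟩
  have := IsSuperLegal.lastBlock (L := L) (c := c) 1 le_rfl hL 0 hc1 z
  simpa [List.replicate_succ] using this

/-- Prepending zeros to a super-legal list gives a super-legal list. -/
lemma sl_zeros_append {L : ℕ} {c : ℕ → ℕ} (hL : 1 ≤ L) (hc1 : 1 ≤ c 1) (z : ℕ)
    {r : List ℕ} (hr : IsSuperLegal L c r) :
    IsSuperLegal L c (List.replicate z 0 ++ r) := by
  cases z with
  | zero => simpa using hr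
  | succ k =>
    have := IsSuperLegal.consBlock (L := L) (c := c) 1 le_rfl hL 0 hc1 k r hr
    simpa [List.replicate_succ] using this

lemma sl_cases {L : ℕ} {c : ℕ → ℕ} {q : List ℕ} (h : IsSuperLegal L c q) :
    ∃ s b t, 1 ≤ s ∧ s ≤ L ∧ b < c s ∧
      q = (List.range' 1 (s - 1)).map c ++ b :: t ∧
      (t = List.replicate t.length 0 ∨ ∃ z r, t = List.replicate z 0 ++ r ∧ IsSuperLegal L c r) := by
  cases h with
  | lastBlock s h1 h2 b hb z =>
      exact ⟨s, b, _, h1, h2, hb, rfl, Or.inl (by simp)⟩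
  | consBlock s h1 h2 b hb z rest hrest =>
      exact ⟨s, b, _, h1, h2, hb, rfl, Or.inr ⟨z, rest, rfl, hrest⟩⟩

/-- Any super-legal list longer than `L` splits into an initial block followed by a
super-legal tail. -/
lemma sl_destruct {L : ℕ} {c : ℕ → ℕ} (hL : 1 ≤ L) (hc1 : 1 ≤ c 1) {q : List ℕ}
    (h : IsSuperLegal L c q) (hlen : L < q.length) :
    ∃ s b t, 1 ≤ s ∧ s ≤ L ∧ b < c s ∧ IsSuperLegal L c t ∧
      q = (List.range' 1 (s - 1)).map c ++ b :: t := by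
  obtain ⟨s, b, t, h1, h2, hb, rfl, ht⟩ := sl_cases h
  have hlt : 1 ≤ t.length := by
    simp only [List.length_append, List.length_map, List.length_range', List.length_cons] at hlen
    omega
  refine ⟨s, b, t, h1, h2, hb, ?_, rfl⟩
  rcases ht with ht | ⟨z, r, rfl, hr⟩
  · rw [ht]; exact sl_zeros hL hc1 hlt
  · exact sl_zeros_append hL hc1 z hr

lemma block_eq_aux {c : ℕ → ℕ} {j j' b b' : ℕ} {t t' : List ℕ}
    (hj : 1 ≤ j) (hjj : j < j')
    (h : (List.range' 1 (j - 1)).map c ++ b :: t = (List.range' 1 (j' - 1)).map c ++ b' :: t') :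
    b = c j := by
  have hlen : ((List.range' 1 (j - 1)).map c).length = j - 1 := by simp
  have hlen' : ((List.range' 1 (j' - 1)).map c).length = j' - 1 := by simp
  have hidx : j - 1 < ((List.range' 1 (j - 1)).map c ++ b :: t).length := by
    simp only [List.length_append, List.length_map, List.length_range', List.length_cons]
    omega
  have h1 : ((List.range' 1 (j - 1)).map c ++ b :: t)[j - 1]'hidx = b := by
    rw [List.getElem_append_right (by omega : ((List.range' 1 (j - 1)).map c).length ≤ j - 1)]
    simp [hlen]
  have hidx2 : j - 1 < ((List.range' 1 (j' - 1)).map c).length := by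
    simp only [List.length_map, List.length_range']
    omega
  have h2 : ((List.range' 1 (j' - 1)).map c ++ b' :: t')[j - 1]'(h ▸ hidx) = c j := by
    rw [List.getElem_append_left hidx2]
    rw [List.getElem_map]
    rw [List.getElem_range']
    congr 1
    omega
  have h3 := List.getElem_of_eq h hidx
  rw [h1] at h3
  exact h3.trans h2

lemma block_inj {c : ℕ → ℕ} {j j' b b' : ℕ} {t t' : List ℕ}
    (hj : 1 ≤ j) (hj' : 1 ≤ j') (hb : b < c j) (hb' : b' < c j')
    (h : (List.range' 1 (j - 1)).map c ++ b :: t = (List.range' 1 (j' - 1)).map c ++ b' :: t') :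
    j = j' ∧ b = b' ∧ t = t' := by
  have hjj : j = j' := by
    by_contra hne
    rcases Nat.lt_or_ge j j' with hlt | hge
    · exact absurd (block_eq_aux hj hlt h) (Nat.ne_of_lt hb)
    · have hlt : j' < j := by omega
      exact absurd (block_eq_aux hj' hlt h.symm) (Nat.ne_of_lt hb')
  subst hjj
  have h2 := List.append_cancel_left h
  refine ⟨rfl, ?_, ?_⟩
  · exact (List.cons.injEq _ _ _ _ ▸ h2).1
  · exact (List.cons.injEq _ _ _ _ ▸ h2).2

/-- Every entry of a super-legal list is bounded by the largest coefficient. -/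
lemma sl_bound {L : ℕ} {c : ℕ → ℕ} {q : List ℕ} (h : IsSuperLegal L c q) :
    ∀ x ∈ q, x ≤ (Finset.Icc 1 L).sup c := by
  induction h with
  | lastBlock s h1 h2 b hb z =>
    intro x hx
    simp only [List.mem_append, List.mem_map, List.mem_cons, List.mem_replicate] at hx
    rcases hx with ⟨i, hi, rfl⟩ | rfl | ⟨_, rfl⟩
    · rw [List.mem_range'_1] at hi
      exact Finset.le_sup (Finset.mem_Icc.2 ⟨hi.1, by omega⟩)
    · exact le_trans (le_of_lt hb) (Finset.le_sup (Finset.mem_Icc.2 ⟨h1, h2⟩))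
    · exact Nat.zero_le _
  | consBlock s h1 h2 b hb z rest hrest ih =>
    intro x hx
    simp only [List.mem_append, List.mem_map, List.mem_cons, List.mem_replicate] at hx
    rcases hx with ⟨i, hi, rfl⟩ | rfl | ⟨_, rfl⟩ | hx
    · rw [List.mem_range'_1] at hi
      exact Finset.le_sup (Finset.mem_Icc.2 ⟨hi.1, by omega⟩)
    · exact le_trans (le_of_lt hb) (Finset.le_sup (Finset.mem_Icc.2 ⟨h1, h2⟩))
    · exact Nat.zero_le _
    · exact ih x hx

lemma sl_finite (L : ℕ) (c : ℕ → ℕ) (m : ℕ) :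
    Finite {q : List ℕ // q.length = m ∧ IsSuperLegal L c q} := by
  set M := (Finset.Icc 1 L).sup c with hM
  apply Finite.of_injective
    (f := fun q : {q : List ℕ // q.length = m ∧ IsSuperLegal L c q} =>
      fun i : Fin m => (⟨min (q.1.getD i 0) M, by omega⟩ : Fin (M + 1)))
  intro q q' hqq
  have hb : ∀ (r : {q : List ℕ // q.length = m ∧ IsSuperLegal L c q}) (i : ℕ) (hi : i < r.1.length),
      r.1[i] ≤ M := fun r i hi => sl_bound r.2.2 _ (List.getElem_mem hi)
  ext1
  apply List.ext_getElem (by rw [q.2.1, q'.2.1])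
  intro i h1 h2
  have := congrFun hqq ⟨i, by omega⟩
  simp only [Fin.mk.injEq] at this
  rw [List.getD_eq_getElem _ _ h1, List.getD_eq_getElem _ _ h2] at this
  have b1 := hb q i h1
  have b2 := hb q' i h2
  omega

theorem numSuperLegal_recurrence
    (L : ℕ) (c G : ℕ → ℕ)
    (hL : 1 ≤ L) (hc1 : 1 ≤ c 1) (hcL : 1 ≤ c L)
    (hGpos : ∀ i, 1 ≤ i → 1 ≤ G i)
    (hGrec : ∀ n, L ≤ n → G (n + 1) = ∑ i ∈ Finset.Icc 1 L, c i * G (n + 1 - i))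
 :
    ∀ n, L ≤ n →
      numSuperLegal L c (n + 1) = ∑ j ∈ Finset.Icc 1 L, c j * numSuperLegal L c (n + 1 - j) := by
  intro n hn
  -- the sigma type of (block position, digit, super-legal tail)
  let S : ℕ → Type := fun j => {t : List ℕ // t.length = n + 1 - j ∧ IsSuperLegal L c t}
  let T : Type := Σ j : (Finset.Icc 1 L : Finset ℕ), Fin (c j.1) × S j.1
  have hfin : ∀ m, Finite {q : List ℕ // q.length = m ∧ IsSuperLegal L c q} := sl_finite L c
  -- the map assembling a super-legal list from the data
  let g : T → {q : List ℕ // q.length = n + 1 ∧ IsSuperLegal L c q} := fun x =>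
    ⟨(List.range' 1 (x.1.1 - 1)).map c ++ (x.2.1 : ℕ) :: x.2.2.1, by
      obtain ⟨⟨j, hj⟩, b, t⟩ := x
      rw [Finset.mem_Icc] at hj
      constructor
      · simp only [List.length_append, List.length_map, List.length_range', List.length_cons,
          t.2.1]
        omega
      · have := IsSuperLegal.consBlock (L := L) (c := c) j hj.1 hj.2 b b.2 0 t.1 t.2.2
        simpa using this⟩
  have hg : Function.Bijective g := by
    constructor
    · rintro ⟨⟨j, hj⟩, b, t⟩ ⟨⟨j', hj'⟩, b', t'⟩ h
      rw [Finset.mem_Icc] at hj hj'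
      simp only [g, Subtype.mk.injEq] at h
      obtain ⟨hjj, hbb, htt⟩ := block_inj hj.1 hj'.1 b.2 b'.2 h
      subst hjj
      obtain rfl : b = b' := Fin.ext hbb
      obtain rfl : t = t' := Subtype.ext htt
      rfl
    · rintro ⟨q, hlen, hsl⟩
      have hqlen : L < q.length := by omega
      obtain ⟨s, b, t, h1, h2, hb, htsl, rfl⟩ := sl_destruct hL hc1 hsl hqlen
      have htlen : t.length = n + 1 - s := by
        simp only [List.length_append, List.length_map, List.length_range',
          List.length_cons] at hlen
        omega
      exact ⟨⟨⟨s, Finset.mem_Icc.2 ⟨h1, h2⟩⟩, ⟨b, hb⟩, ⟨t, htlen, htsl⟩⟩, rfl⟩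
  have hcard : numSuperLegal L c (n + 1) = Nat.card T := by
    rw [numSuperLegal]
    exact (Nat.card_eq_of_bijective g hg).symm
  rw [hcard]
  haveI : ∀ j : (Finset.Icc 1 L : Finset ℕ), Finite (S j.1) := fun j => hfin _
  haveI : ∀ j : (Finset.Icc 1 L : Finset ℕ), Fintype (S j.1) := fun j => Fintype.ofFinite _
  have : Nat.card T = ∑ j : (Finset.Icc 1 L : Finset ℕ), c j.1 * Nat.card (S j.1) := by
    rw [Nat.card_eq_fintype_card, Fintype.card_sigma]
    congr 1
    funext j
    rw [Fintype.card_prod, Fintype.card_fin, Nat.card_eq_fintype_card]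
  rw [this]
  exact Finset.sum_coe_sort (Finset.Icc 1 L) (fun j => c j * numSuperLegal L c (n + 1 - j))
end

section
/- Let {G_n} be a positive linear recurrence sequence, and let H_n denote the number of super-legal decompositions using only the terms G_1, G_2, ..., G_n. Then the limit as n → ∞ of H_n / G_n exists and is positive. -/
open Finset Filter Asymptotics

open scoped Classical

open Finset

namespace SLaux

variable {L : ℕ} {c : ℕ → ℕ}

lemma zeros_superlegal (hL : 1 ≤ L) (hc1 : 1 ≤ c 1) (z : ℕ) :
    IsSuperLegal L c (List.replicate (z + 1) 0) := by
  have h := IsSuperLegal.lastBlock (L := L) (c := c) 1 le_rfl hL 0 hc1 z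
  rw [List.replicate_succ]
  simpa using h

lemma cons_zero (hL : 1 ≤ L) (hc1 : 1 ≤ c 1) {t : List ℕ} (ht : IsSuperLegal L c t) :
    IsSuperLegal L c (0 :: t) := by
  have h := IsSuperLegal.consBlock (L := L) (c := c) 1 le_rfl hL 0 hc1 0 t ht
  simpa using h

lemma zeros_append (hL : 1 ≤ L) (hc1 : 1 ≤ c 1) {t : List ℕ} (ht : IsSuperLegal L c t)
    (z : ℕ) : IsSuperLegal L c (List.replicate z 0 ++ t) := by
  induction z with
  | zero => simpa using ht
  | succ n ih => simpa [List.replicate_succ] using cons_zero hL hc1 ih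

lemma structure_lemma (hL : 1 ≤ L) (hc1 : 1 ≤ c 1) {q : List ℕ}
    (hq : IsSuperLegal L c q) :
    ∃ s b t, 1 ≤ s ∧ s ≤ L ∧ b < c s ∧
      q = (List.range' 1 (s - 1)).map c ++ b :: t ∧ (t = [] ∨ IsSuperLegal L c t) := by
  cases hq with
  | lastBlock s h1 h2 b hb z =>
      refine ⟨s, b, List.replicate z 0, h1, h2, hb, rfl, ?_⟩
      cases z with
      | zero => exact Or.inl rfl
      | succ n => exact Or.inr (zeros_superlegal hL hc1 n)
  | consBlock s h1 h2 b hb z rest hrest =>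
      exact ⟨s, b, List.replicate z 0 ++ rest, h1, h2, hb, rfl,
        Or.inr (zeros_append hL hc1 hrest z)⟩

lemma build (h1 : 1 ≤ s) (h2 : s ≤ L) (hb : b < c s) {t : List ℕ}
    (ht : t = [] ∨ IsSuperLegal L c t) :
    IsSuperLegal L c ((List.range' 1 (s - 1)).map c ++ b :: t) := by
  rcases ht with rfl | ht
  · simpa using IsSuperLegal.lastBlock (L := L) (c := c) s h1 h2 b hb 0
  · simpa using IsSuperLegal.consBlock (L := L) (c := c) s h1 h2 b hb 0 t ht

lemma length_pos {q : List ℕ} (hq : IsSuperLegal L c q) : 1 ≤ q.length := by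
  cases hq <;> simp <;> omega

end SLaux

namespace SLaux2

variable {L : ℕ} {c : ℕ → ℕ}

lemma uniq_aux {s s' b b' : ℕ} {t t' : List ℕ} (hs : 1 ≤ s) (hss : s ≤ s')
    (hb : b < c s)
    (h : (List.range' 1 (s - 1)).map c ++ b :: t = (List.range' 1 (s' - 1)).map c ++ b' :: t') :
    s = s' := by
  by_contra hne
  have hlt : s < s' := lt_of_le_of_ne hss hne
  have hlen : s - 1 < ((List.range' 1 (s - 1)).map c ++ b :: t).length := by
    simp only [List.length_append, List.length_map, List.length_range', List.length_cons]; omega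
  have hlen' : s - 1 < ((List.range' 1 (s' - 1)).map c ++ b' :: t').length := by
    simp only [List.length_append, List.length_map, List.length_range', List.length_cons]; omega
  have he : ((List.range' 1 (s - 1)).map c ++ b :: t)[s-1]'hlen =
      ((List.range' 1 (s' - 1)).map c ++ b' :: t')[s-1]'hlen' := by
    simp only [h]
  have hx1 : ((List.range' 1 (s - 1)).map c).length ≤ s - 1 := by simp
  have h1 : ((List.range' 1 (s - 1)).map c ++ b :: t)[s-1]'hlen = b := by
    rw [List.getElem_append_right hx1]
    simp
  have hx2 : s - 1 < ((List.range' 1 (s' - 1)).map c).length := by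
    simp only [List.length_map, List.length_range']; omega
  have h2 : ((List.range' 1 (s' - 1)).map c ++ b' :: t')[s-1]'hlen' = c s := by
    rw [List.getElem_append_left hx2]
    have hy : ((List.range' 1 (s' - 1)).map c)[s-1]'hx2 = c (1 + 1 * (s-1)) := by
      simp only [List.getElem_map, List.getElem_range']
    rw [hy]
    congr 1
    omega
  rw [h1, h2] at he
  omega

lemma uniq {s s' b b' : ℕ} {t t' : List ℕ} (hs : 1 ≤ s) (hs' : 1 ≤ s')
    (hb : b < c s) (hb' : b' < c s')
    (h : (List.range' 1 (s - 1)).map c ++ b :: t = (List.range' 1 (s' - 1)).map c ++ b' :: t') :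
    s = s' ∧ b = b' ∧ t = t' := by
  have hss : s = s' := by
    rcases le_total s s' with h1 | h1
    · exact uniq_aux hs h1 hb h
    · exact (uniq_aux hs' h1 hb' h.symm).symm
  subst hss
  have := List.append_cancel_left h
  simp only [List.cons.injEq] at this
  exact ⟨rfl, this.1, this.2⟩

end SLaux2

namespace SLaux3
open SLaux SLaux2

variable {L : ℕ} {c : ℕ → ℕ}

lemma entry_le {q : List ℕ} (hq : IsSuperLegal L c q) :
    ∀ x ∈ q, x ≤ (Finset.Icc 1 L).sup c := by
  induction hq with
  | lastBlock s h1 h2 b hb z =>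
      intro x hx
      rcases List.mem_append.1 hx with h | h
      · obtain ⟨i, hi, rfl⟩ := List.mem_map.1 h
        obtain ⟨k, hk, rfl⟩ := List.mem_range'.1 hi
        exact Finset.le_sup (Finset.mem_Icc.2 ⟨by omega, by omega⟩)
      · rcases List.mem_cons.1 h with rfl | h
        · exact le_trans hb.le (Finset.le_sup (Finset.mem_Icc.2 ⟨h1, h2⟩))
        · rw [List.eq_of_mem_replicate h]
          exact Nat.zero_le _
  | consBlock s h1 h2 b hb z rest hrest ih =>
      intro x hx
      rcases List.mem_append.1 hx with h | h
      · obtain ⟨i, hi, rfl⟩ := List.mem_map.1 h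
        obtain ⟨k, hk, rfl⟩ := List.mem_range'.1 hi
        exact Finset.le_sup (Finset.mem_Icc.2 ⟨by omega, by omega⟩)
      · rcases List.mem_cons.1 h with rfl | h
        · exact le_trans hb.le (Finset.le_sup (Finset.mem_Icc.2 ⟨h1, h2⟩))
        · rcases List.mem_append.1 h with h | h
          · rw [List.eq_of_mem_replicate h]
            exact Nat.zero_le _
          · exact ih x h

lemma finite_SL (L : ℕ) (c : ℕ → ℕ) (n : ℕ) :
    Finite {q : List ℕ // q.length = n ∧ IsSuperLegal L c q} := by
  set M := (Finset.Icc 1 L).sup c with hM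
  have hbd : ∀ (q : {q : List ℕ // q.length = n ∧ IsSuperLegal L c q}) (i : ℕ),
      q.1.getD i 0 < M + 1 := by
    rintro ⟨q, hlen, hsl⟩ i
    rcases lt_or_ge i q.length with h | h
    · rw [List.getD_eq_getElem q 0 h]
      have := entry_le hsl (q[i]'h) (List.getElem_mem _)
      omega
    · rw [List.getD_eq_default q 0 h]
      omega
  refine Finite.of_injective
    (fun q => (fun i : Fin n => (⟨q.1.getD (i : ℕ) 0, hbd q i⟩ : Fin (M + 1)))) ?_
  rintro ⟨q, hq⟩ ⟨q', hq'⟩ h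
  simp only [Subtype.mk.injEq]
  apply List.ext_getElem (by omega)
  intro i h1 h2
  have h3 := congrFun h ⟨i, by omega⟩
  simp only [Fin.mk.injEq] at h3
  rwa [List.getD_eq_getElem q 0 h1, List.getD_eq_getElem q' 0 h2] at h3

lemma H_zero : numSuperLegal L c 0 = 0 := by
  have : IsEmpty {q : List ℕ // q.length = 0 ∧ IsSuperLegal L c q} := by
    refine ⟨?_⟩
    rintro ⟨q, hq, hsl⟩
    have := length_pos hsl
    omega
  unfold numSuperLegal
  exact Nat.card_of_isEmpty

lemma H_pos (hL : 1 ≤ L) (hc1 : 1 ≤ c 1) {n : ℕ} (hn : 1 ≤ n) :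
    0 < numSuperLegal L c n := by
  haveI := finite_SL L c n
  haveI : Nonempty {q : List ℕ // q.length = n ∧ IsSuperLegal L c q} := by
    refine ⟨⟨List.replicate n 0, by simp, ?_⟩⟩
    have h : n = (n - 1) + 1 := by omega
    rw [h]
    exact zeros_superlegal hL hc1 (n - 1)
  exact Nat.card_pos

lemma sum_Icc_one (f : ℕ → ℕ) (K : ℕ) :
    ∑ i ∈ Finset.Icc 1 K, f i = ∑ i ∈ Finset.range K, f (i + 1) := by
  induction K with
  | zero => simp
  | succ k ih =>
      rw [Finset.sum_Icc_succ_top (by omega), ih, Finset.sum_range_succ]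

lemma H_rec (hL : 1 ≤ L) (hc1 : 1 ≤ c 1) {n : ℕ} (hn : L + 1 ≤ n) :
    numSuperLegal L c n = ∑ i ∈ Finset.Icc 1 L, c i * numSuperLegal L c (n - i) := by
  classical
  haveI : ∀ m, Finite {q : List ℕ // q.length = m ∧ IsSuperLegal L c q} :=
    fun m => finite_SL L c m
  haveI : ∀ m, Fintype {q : List ℕ // q.length = m ∧ IsSuperLegal L c q} :=
    fun m => Fintype.ofFinite _
  set g : (Σ s : Fin L, Fin (c (s.1 + 1)) ×
      {q : List ℕ // q.length = n - (s.1 + 1) ∧ IsSuperLegal L c q}) →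
      {q : List ℕ // q.length = n ∧ IsSuperLegal L c q} :=
    fun x => ⟨(List.range' 1 ((x.1.1 + 1) - 1)).map c ++ x.2.1.1 :: x.2.2.1,
      by
        have h1 := x.2.2.2.1
        simp only [List.length_append, List.length_map, List.length_range', List.length_cons, h1]
        have := x.1.2
        omega,
      build (by omega) (by have := x.1.2; omega) x.2.1.2 (Or.inr x.2.2.2.2)⟩ with hg
  have hginj : Function.Injective g := by
    rintro ⟨⟨s, hs⟩, ⟨b, hbl⟩, t, ht, hts⟩ ⟨⟨s', hs'⟩, ⟨b', hbl'⟩, t', ht', hts'⟩ h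
    have h2 : (List.range' 1 ((s + 1) - 1)).map c ++ b :: t =
        (List.range' 1 ((s' + 1) - 1)).map c ++ b' :: t' := congrArg Subtype.val h
    obtain ⟨e1, e2, e3⟩ := uniq (s := s + 1) (s' := s' + 1) (by omega) (by omega) hbl hbl' h2
    obtain rfl : s = s' := by omega
    subst e2
    subst e3
    rfl
  have hgsurj : Function.Surjective g := by
    rintro ⟨q, hlen, hsl⟩
    obtain ⟨s, b, t, h1, h2, h3, h4, h5⟩ := structure_lemma hL hc1 hsl
    have hlt : t.length = n - s := by
      rw [h4] at hlen
      simp only [List.length_append, List.length_map, List.length_range',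
        List.length_cons] at hlen
      omega
    have hs1 : s - 1 + 1 = s := by omega
    have htne : IsSuperLegal L c t := by
      rcases h5 with rfl | h5
      · exfalso
        rw [h4] at hlen
        simp only [List.length_append, List.length_map, List.length_range',
          List.length_cons, List.length_nil] at hlen
        omega
      · exact h5
    refine ⟨⟨⟨s - 1, by omega⟩, ⟨b, by show b < c (s - 1 + 1); rw [hs1]; exact h3⟩,
      ⟨t, by show t.length = n - (s - 1 + 1); rw [hs1]; exact hlt, htne⟩⟩, Subtype.ext ?_⟩
    show (List.range' 1 ((s - 1 + 1) - 1)).map c ++ b :: t = q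
    rw [hs1]
    exact h4.symm
  have hcard : numSuperLegal L c n =
      ∑ s : Fin L, c (s.1 + 1) * numSuperLegal L c (n - (s.1 + 1)) := by
    have h1 : numSuperLegal L c n = Nat.card (Σ s : Fin L, Fin (c (s.1 + 1)) ×
        {q : List ℕ // q.length = n - (s.1 + 1) ∧ IsSuperLegal L c q}) :=
      (Nat.card_congr (Equiv.ofBijective g ⟨hginj, hgsurj⟩)).symm
    rw [h1, Nat.card_eq_fintype_card, Fintype.card_sigma]
    congr 1
    funext s
    rw [Fintype.card_prod, Fintype.card_fin]
    congr 1
    rw [numSuperLegal, Nat.card_eq_fintype_card]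
  rw [hcard, sum_Icc_one (fun i => c i * numSuperLegal L c (n - i)) L,
    ← Fin.sum_univ_eq_sum_range (fun i => c (i + 1) * numSuperLegal L c (n - (i + 1))) L]

end SLaux3

namespace SLaux4
open Finset Filter

lemma ratio_tendsto (L : ℕ) (hL : 1 ≤ L) (a u v : ℕ → ℝ)
    (ha0 : ∀ i ∈ Finset.Icc 1 L, 0 ≤ a i) (ha1 : 1 ≤ a 1)
    (hupos : ∀ n, 1 ≤ n → 0 < u n) (hvpos : ∀ n, 1 ≤ n → 0 < v n)
    (hu : ∀ n, L + 1 ≤ n → u n = ∑ i ∈ Finset.Icc 1 L, a i * u (n - i))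
    (hv : ∀ n, L + 1 ≤ n → v n = ∑ i ∈ Finset.Icc 1 L, a i * v (n - i)) :
    ∃ B : ℝ, 0 < B ∧
      Filter.Tendsto (fun n => u n / v n) Filter.atTop (nhds B) := by
  classical
  have h1mem : (1 : ℕ) ∈ Finset.Icc 1 L := Finset.mem_Icc.2 ⟨le_rfl, hL⟩
  set r : ℕ → ℝ := fun n => u n / v n with hr
  set N0 : ℕ := 2 * L + 1 with hN0
  set C : ℝ := ∑ i ∈ Finset.Icc 1 L, a i with hC
  have hC1 : 1 ≤ C := le_trans ha1 (Finset.single_le_sum ha0 h1mem)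
  have hC0 : 0 < C := lt_of_lt_of_le one_pos hC1
  set δ : ℝ := a 1 / C with hδ
  have hδ0 : 0 < δ := div_pos (lt_of_lt_of_le one_pos ha1) hC0
  have hδ1 : δ ≤ 1 := (div_le_one hC0).2 (Finset.single_le_sum ha0 h1mem)
  -- monotonicity of v
  have hvmono : ∀ k, L ≤ k → v k ≤ v (k + 1) := by
    intro k hk
    have h1 := hv (k + 1) (by omega)
    have h2 : a 1 * v (k + 1 - 1) ≤ ∑ i ∈ Finset.Icc 1 L, a i * v (k + 1 - i) := by
      refine Finset.single_le_sum (f := fun i => a i * v (k + 1 - i)) (fun i hi => ?_) h1mem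
      have hi' := Finset.mem_Icc.1 hi
      exact mul_nonneg (ha0 i hi) (hvpos _ (by omega)).le
    have h3 : v k ≤ a 1 * v k :=
      le_mul_of_one_le_left (hvpos k (by omega)).le ha1
    calc v k ≤ a 1 * v k := h3
      _ = a 1 * v (k + 1 - 1) := by norm_num
      _ ≤ ∑ i ∈ Finset.Icc 1 L, a i * v (k + 1 - i) := h2
      _ = v (k + 1) := (h1).symm
  have hvmono' : ∀ j k, L ≤ j → j ≤ k → v j ≤ v k := by
    intro j k hj hjk
    induction k, hjk using Nat.le_induction with
    | base => exact le_refl _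
    | succ k hk ih => exact le_trans ih (hvmono k (by omega))
  -- bounded growth of v
  have hvC : ∀ k, N0 ≤ k → v k ≤ C * v (k - 1) := by
    intro k hk
    have h1 := hv k (by omega)
    have h2 : ∑ i ∈ Finset.Icc 1 L, a i * v (k - i) ≤
        ∑ i ∈ Finset.Icc 1 L, a i * v (k - 1) := by
      refine Finset.sum_le_sum (fun i hi => ?_)
      have hi' := Finset.mem_Icc.1 hi
      exact mul_le_mul_of_nonneg_left (hvmono' (k - i) (k - 1) (by omega) (by omega)) (ha0 i hi)
    calc v k = ∑ i ∈ Finset.Icc 1 L, a i * v (k - i) := h1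
      _ ≤ ∑ i ∈ Finset.Icc 1 L, a i * v (k - 1) := h2
      _ = C * v (k - 1) := by rw [hC, Finset.sum_mul]
  -- weights
  set w : ℕ → ℕ → ℝ := fun k i => a i * v (k - i) / v k with hw
  have hw0 : ∀ k, L + 1 ≤ k → ∀ i ∈ Finset.Icc 1 L, 0 ≤ w k i := by
    intro k hk i hi
    have hi' := Finset.mem_Icc.1 hi
    exact div_nonneg (mul_nonneg (ha0 i hi) (hvpos _ (by omega)).le)
      (hvpos k (by omega)).le
  have hwsum : ∀ k, L + 1 ≤ k → ∑ i ∈ Finset.Icc 1 L, w k i = 1 := by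
    intro k hk
    have hvk := hvpos k (by omega)
    rw [hw]
    simp only
    rw [← Finset.sum_div, ← hv k hk, div_self hvk.ne']
  have hw1 : ∀ k, N0 ≤ k → δ ≤ w k 1 := by
    intro k hk
    have hvk := hvpos k (by omega)
    have hvk1 := hvpos (k - 1) (by omega)
    rw [hδ, hw]
    simp only
    rw [div_le_div_iff₀ hC0 hvk]
    have := hvC k hk
    nlinarith [ (lt_of_lt_of_le one_pos ha1) ]
  have hrrec : ∀ k, L + 1 ≤ k → r k = ∑ i ∈ Finset.Icc 1 L, w k i * r (k - i) := by
    intro k hk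
    have hvk := hvpos k (by omega)
    have : ∀ i ∈ Finset.Icc 1 L, w k i * r (k - i) = a i * u (k - i) / v k := by
      intro i hi
      have hi' := Finset.mem_Icc.1 hi
      have hvki := hvpos (k - i) (by omega)
      rw [hw, hr]
      simp only
      field_simp
    rw [Finset.sum_congr rfl this, ← Finset.sum_div, ← hu k hk, hr]
  -- windows
  have hWne : ∀ n : ℕ, (Finset.Icc n (n + L - 1)).Nonempty :=
    fun n => ⟨n, Finset.mem_Icc.2 ⟨le_rfl, by omega⟩⟩
  set m : ℕ → ℝ := fun n => (Finset.Icc n (n + L - 1)).inf' (hWne n) r with hm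
  set M : ℕ → ℝ := fun n => (Finset.Icc n (n + L - 1)).sup' (hWne n) r with hM
  -- window bounds
  have C1 : ∀ n, N0 ≤ n → ∀ k, n ≤ k → m n ≤ r k ∧ r k ≤ M n := by
    intro n hn k
    induction k using Nat.strong_induction_on with
    | _ k ih =>
      intro hk
      by_cases hk2 : k ≤ n + L - 1
      · have hkmem : k ∈ Finset.Icc n (n + L - 1) := Finset.mem_Icc.2 ⟨hk, hk2⟩
        exact ⟨Finset.inf'_le r hkmem, Finset.le_sup' r hkmem⟩
      · have hkL : L + 1 ≤ k := by omega
        have hrec := hrrec k hkL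
        constructor
        · calc m n = (∑ i ∈ Finset.Icc 1 L, w k i) * m n := by
                rw [hwsum k hkL, one_mul]
            _ = ∑ i ∈ Finset.Icc 1 L, w k i * m n := Finset.sum_mul _ _ _
            _ ≤ ∑ i ∈ Finset.Icc 1 L, w k i * r (k - i) := by
                refine Finset.sum_le_sum (fun i hi => ?_)
                have hi' := Finset.mem_Icc.1 hi
                exact mul_le_mul_of_nonneg_left
                  ((ih (k - i) (by omega) (by omega)).1) (hw0 k hkL i hi)
            _ = r k := hrec.symm
        · calc r k = ∑ i ∈ Finset.Icc 1 L, w k i * r (k - i) := hrec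
            _ ≤ ∑ i ∈ Finset.Icc 1 L, w k i * M n := by
                refine Finset.sum_le_sum (fun i hi => ?_)
                have hi' := Finset.mem_Icc.1 hi
                exact mul_le_mul_of_nonneg_left
                  ((ih (k - i) (by omega) (by omega)).2) (hw0 k hkL i hi)
            _ = (∑ i ∈ Finset.Icc 1 L, w k i) * M n := (Finset.sum_mul _ _ _).symm
            _ = M n := by rw [hwsum k hkL, one_mul]
  -- monotonicity of windows
  have hmmono : ∀ n n', N0 ≤ n → n ≤ n' → m n ≤ m n' := by
    intro n n' hn hnn
    refine Finset.le_inf' (hWne n') r (fun k hk => ?_)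
    have hk' := Finset.mem_Icc.1 hk
    exact (C1 n hn k (by omega)).1
  have hMmono : ∀ n n', N0 ≤ n → n ≤ n' → M n' ≤ M n := by
    intro n n' hn hnn
    refine Finset.sup'_le (hWne n') r (fun k hk => ?_)
    have hk' := Finset.mem_Icc.1 hk
    exact (C1 n hn k (by omega)).2
  have hmM : ∀ n, N0 ≤ n → m n ≤ M n :=
    fun n hn => le_trans (C1 n hn n le_rfl).1 (C1 n hn n le_rfl).2
  -- contraction
  have hcontr : ∀ n, N0 ≤ n →
      M (n + 3 * L) - m (n + 3 * L) ≤ (1 - δ ^ (2 * L - 1)) * (M n - m n) := by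
    intro n hn
    obtain ⟨j, hjmem, hjeq⟩ := Finset.exists_mem_eq_sup' (hWne (n + L)) r
    have hj' := Finset.mem_Icc.1 hjmem
    have hg0 : 0 ≤ r j - m n := sub_nonneg.2 (C1 n hn j (by omega)).1
    have hpush : ∀ t : ℕ, m n + δ ^ t * (r j - m n) ≤ r (j + t) := by
      intro t
      induction t with
      | zero => simp
      | succ t ih =>
        have hkL : L + 1 ≤ j + t + 1 := by omega
        have hkN0 : N0 ≤ j + t + 1 := by omega
        have hs1 : ∑ i ∈ Finset.Icc 1 L, w (j + t + 1) i *
            (if i = 1 then m n + δ ^ t * (r j - m n) else m n) =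
            m n + w (j + t + 1) 1 * (δ ^ t * (r j - m n)) := by
          have he : ∀ i ∈ Finset.Icc 1 L, w (j + t + 1) i *
              (if i = 1 then m n + δ ^ t * (r j - m n) else m n) =
              w (j + t + 1) i * m n +
                (if i = 1 then w (j + t + 1) i * (δ ^ t * (r j - m n)) else 0) := by
            intro i hi
            by_cases h : i = 1 <;> simp [h] <;> ring
          rw [Finset.sum_congr rfl he, Finset.sum_add_distrib,
            Finset.sum_ite_eq' (Finset.Icc 1 L) 1
              (fun i => w (j + t + 1) i * (δ ^ t * (r j - m n))),
            if_pos h1mem, ← Finset.sum_mul, hwsum _ hkL, one_mul]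
        have hstep : ∑ i ∈ Finset.Icc 1 L, w (j + t + 1) i *
            (if i = 1 then m n + δ ^ t * (r j - m n) else m n) ≤
            ∑ i ∈ Finset.Icc 1 L, w (j + t + 1) i * r (j + t + 1 - i) := by
          refine Finset.sum_le_sum (fun i hi => ?_)
          have hi' := Finset.mem_Icc.1 hi
          by_cases h : i = 1
          · subst h
            simp only [if_pos rfl]
            have : j + t + 1 - 1 = j + t := by omega
            rw [this]
            exact mul_le_mul_of_nonneg_left ih (hw0 _ hkL 1 h1mem)
          · simp only [if_neg h]
            exact mul_le_mul_of_nonneg_left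
              ((C1 n hn (j + t + 1 - i) (by omega)).1) (hw0 _ hkL i hi)
        calc m n + δ ^ (t + 1) * (r j - m n)
            = m n + δ * (δ ^ t * (r j - m n)) := by ring
          _ ≤ m n + w (j + t + 1) 1 * (δ ^ t * (r j - m n)) := by
              have := mul_le_mul_of_nonneg_right (hw1 _ hkN0)
                (mul_nonneg (pow_nonneg hδ0.le t) hg0)
              linarith
          _ = ∑ i ∈ Finset.Icc 1 L, w (j + t + 1) i *
              (if i = 1 then m n + δ ^ t * (r j - m n) else m n) := hs1.symm
          _ ≤ ∑ i ∈ Finset.Icc 1 L, w (j + t + 1) i * r (j + t + 1 - i) := hstep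
          _ = r (j + t + 1) := (hrrec _ hkL).symm
    have hkey : ∀ k ∈ Finset.Icc (j + L) (j + L + L - 1),
        m n + δ ^ (2 * L - 1) * (r j - m n) ≤ r k := by
      intro k hk
      have hk' := Finset.mem_Icc.1 hk
      have ht := hpush (k - j)
      have hjk : j + (k - j) = k := by omega
      rw [hjk] at ht
      refine le_trans ?_ ht
      have hpp : δ ^ (2 * L - 1) ≤ δ ^ (k - j) :=
        pow_le_pow_of_le_one hδ0.le hδ1 (by omega)
      nlinarith
    have h5 : m n + δ ^ (2 * L - 1) * (r j - m n) ≤ m (j + L) :=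
      Finset.le_inf' _ r hkey
    have h6 : M (n + 3 * L) ≤ M (j + L) := hMmono (j + L) (n + 3 * L) (by omega) (by omega)
    have h7 : m (j + L) ≤ m (n + 3 * L) := hmmono (j + L) (n + 3 * L) (by omega) (by omega)
    have h9 : r j ≤ M n := (C1 n hn j (by omega)).2
    have h8 : M (j + L) ≤ M (n + L) := hMmono (n + L) (j + L) (by omega) (by omega)
    have h11 : M (n + L) = r j := hjeq
    have hδ'1 : δ ^ (2 * L - 1) ≤ 1 := pow_le_one₀ hδ0.le hδ1
    nlinarith [mul_nonneg (sub_nonneg.2 hδ'1) (sub_nonneg.2 h9)]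
  -- geometric decay
  set ρ : ℝ := 1 - δ ^ (2 * L - 1) with hρ
  have hρ0 : 0 ≤ ρ := sub_nonneg.2 (pow_le_one₀ hδ0.le hδ1)
  have hρ1 : ρ < 1 := by
    have := pow_pos hδ0 (2 * L - 1)
    rw [hρ]
    linarith
  have hD0 : ∀ n, N0 ≤ n → 0 ≤ M n - m n := fun n hn => sub_nonneg.2 (hmM n hn)
  have hDmono : ∀ p q, N0 ≤ p → p ≤ q → M q - m q ≤ M p - m p := fun p q hp hpq =>
    sub_le_sub (hMmono p q hp hpq) (hmmono p q hp hpq)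
  have hgeo : ∀ t : ℕ, M (N0 + t * (3 * L)) - m (N0 + t * (3 * L)) ≤
      ρ ^ t * (M N0 - m N0) := by
    intro t
    induction t with
    | zero => simp
    | succ t ih =>
      have he : N0 + (t + 1) * (3 * L) = N0 + t * (3 * L) + 3 * L := by ring
      rw [he]
      calc M (N0 + t * (3 * L) + 3 * L) - m (N0 + t * (3 * L) + 3 * L)
          ≤ ρ * (M (N0 + t * (3 * L)) - m (N0 + t * (3 * L))) :=
            hcontr (N0 + t * (3 * L)) (by omega)
        _ ≤ ρ * (ρ ^ t * (M N0 - m N0)) := mul_le_mul_of_nonneg_left ih hρ0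
        _ = ρ ^ (t + 1) * (M N0 - m N0) := by ring
  -- limits
  have hbddm : BddAbove (Set.range fun t => m (N0 + t)) := by
    refine ⟨M N0, ?_⟩
    rintro x ⟨t, rfl⟩
    exact (hmM _ (by omega)).trans (hMmono N0 (N0 + t) le_rfl (by omega))
  have hmonom : Monotone (fun t => m (N0 + t)) := by
    intro s t hst
    exact hmmono _ _ (by omega) (by omega)
  set B : ℝ := ⨆ t : ℕ, m (N0 + t) with hB
  have hmB : Filter.Tendsto (fun t => m (N0 + t)) Filter.atTop (nhds B) :=
    tendsto_atTop_ciSup hmonom hbddm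
  have hDanti : Antitone (fun t => M (N0 + t) - m (N0 + t)) := by
    intro s t hst
    exact hDmono _ _ (by omega) (by omega)
  have hDbdd : BddBelow (Set.range fun t => M (N0 + t) - m (N0 + t)) := by
    refine ⟨0, ?_⟩
    rintro x ⟨t, rfl⟩
    exact hD0 _ (by omega)
  have hDinf : Filter.Tendsto (fun t => M (N0 + t) - m (N0 + t)) Filter.atTop
      (nhds (⨅ t : ℕ, (M (N0 + t) - m (N0 + t)))) := tendsto_atTop_ciInf hDanti hDbdd
  have hinf0 : (⨅ t : ℕ, (M (N0 + t) - m (N0 + t))) = 0 := by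
    refine le_antisymm ?_ (le_ciInf (fun t => hD0 _ (by omega)))
    have hlim : Filter.Tendsto (fun t : ℕ => ρ ^ t * (M N0 - m N0)) Filter.atTop (nhds 0) := by
      simpa using (tendsto_pow_atTop_nhds_zero_of_lt_one hρ0 hρ1).mul_const (M N0 - m N0)
    refine ge_of_tendsto' hlim (fun t => ?_)
    calc (⨅ t : ℕ, (M (N0 + t) - m (N0 + t))) ≤
        M (N0 + t * (3 * L)) - m (N0 + t * (3 * L)) := ciInf_le hDbdd (t * (3 * L))
      _ ≤ ρ ^ t * (M N0 - m N0) := hgeo t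
  have hD0' : Filter.Tendsto (fun t => M (N0 + t) - m (N0 + t)) Filter.atTop (nhds 0) :=
    hinf0 ▸ hDinf
  have hMB : Filter.Tendsto (fun t => M (N0 + t)) Filter.atTop (nhds B) := by
    have h := hmB.add hD0'
    have he : (fun t => m (N0 + t) + (M (N0 + t) - m (N0 + t))) = fun t => M (N0 + t) :=
      funext fun t => by ring
    rw [he] at h
    simpa using h
  have hsq : Filter.Tendsto (fun t => r (N0 + t)) Filter.atTop (nhds B) := by
    exact tendsto_of_tendsto_of_tendsto_of_le_of_le hmB hMB
      (fun t => (C1 (N0 + t) (by omega) (N0 + t) le_rfl).1)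
      (fun t => (C1 (N0 + t) (by omega) (N0 + t) le_rfl).2)
  have hfinal : Filter.Tendsto r Filter.atTop (nhds B) := by
    rw [← Filter.tendsto_add_atTop_iff_nat N0]
    simpa [add_comm] using hsq
  have hB0 : 0 < B := by
    have h1 : m N0 ≤ B := by
      have := le_ciSup hbddm 0
      simpa using this
    obtain ⟨k, hk, hkeq⟩ := Finset.exists_mem_eq_inf' (hWne N0) r
    have hk' := Finset.mem_Icc.1 hk
    have h2 : 0 < r k := div_pos (hupos k (by omega)) (hvpos k (by omega))
    have h3 : m N0 = r k := hkeq
    linarith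
  exact ⟨B, hB0, hfinal⟩

end SLaux4

theorem numSuperLegal_div_G_tendsto
    (L : ℕ) (c G : ℕ → ℕ)
    (hL : 1 ≤ L) (hc1 : 1 ≤ c 1) (hcL : 1 ≤ c L)
    (hGpos : ∀ i, 1 ≤ i → 1 ≤ G i)
    (hGrec : ∀ n, L ≤ n → G (n + 1) = ∑ i ∈ Finset.Icc 1 L, c i * G (n + 1 - i))
 :
    ∃ B : ℝ, 0 < B ∧
      Filter.Tendsto (fun n => (numSuperLegal L c n : ℝ) / G n) Filter.atTop (nhds B) := by
  
  have h := SLaux4.ratio_tendsto L hL (fun i => (c i : ℝ))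
    (fun n => (numSuperLegal L c n : ℝ)) (fun n => (G n : ℝ))
    (fun i _ => by positivity)
    (by show (1:ℝ) ≤ (c 1 : ℝ); exact_mod_cast hc1)
    (fun n hn => by
      have := SLaux3.H_pos hL hc1 hn
      show (0:ℝ) < (numSuperLegal L c n : ℝ)
      exact_mod_cast this)
    (fun n hn => by
      have := hGpos n hn
      show (0:ℝ) < (G n : ℝ)
      exact_mod_cast Nat.lt_of_lt_of_le Nat.zero_lt_one this)
    (fun n hn => by
      have h1 := SLaux3.H_rec hL hc1 hn
      push_cast [h1]
      rfl)
    (fun n hn => by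
      have h1 := hGrec (n - 1) (by omega)
      have h2 : n - 1 + 1 = n := by omega
      rw [h2] at h1
      push_cast [h1]
      rfl)
  exact h
end

section
/- Let {G_n} be a positive linear recurrence sequence, let H_n be the number of super-legal decompositions using only G_1, ..., G_n, and let α = min_{1 ≤ j ≤ L} H_j / G_j (which is positive since each H_j > 0). Then H_n ≥ α G_n for all n ≥ 1. -/
open Finset Filter Asymptotics

open scoped Classical

namespace SLAux

/-- The initial block of a super-legal decomposition: `c 1, ..., c (s-1), b`. -/
def blk (c : ℕ → ℕ) (s b : ℕ) : List ℕ := (List.range' 1 (s - 1)).map c ++ [b]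

lemma blk_length (c : ℕ → ℕ) (s b : ℕ) (hs : 1 ≤ s) : (blk c s b).length = s := by
  simp [blk]; omega

lemma isSuperLegal_blk_append (L : ℕ) (c : ℕ → ℕ) {s b : ℕ} (h1 : 1 ≤ s) (h2 : s ≤ L)
    (hb : b < c s) {r : List ℕ} (hr : IsSuperLegal L c r) :
    IsSuperLegal L c (blk c s b ++ r) := by
  have := IsSuperLegal.consBlock s h1 h2 b hb 0 r hr
  simpa [blk] using this

lemma getElem_blk_self (c : ℕ → ℕ) (s b : ℕ) (hs : 1 ≤ s) (r : List ℕ) :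
    (blk c s b ++ r)[s - 1]? = some b := by
  have hlen : ((List.range' 1 (s - 1)).map c).length = s - 1 := by simp
  rw [blk, List.append_assoc, List.getElem?_append_right (by simp), hlen]
  simp

lemma getElem_blk_lt (c : ℕ → ℕ) (s s' b : ℕ) (hss' : s < s') (hs : 1 ≤ s) (r : List ℕ) :
    (blk c s' b ++ r)[s - 1]? = some (c s) := by
  have hlen : s - 1 < ((List.range' 1 (s' - 1)).map c).length := by simp; omega
  rw [blk, List.append_assoc, List.getElem?_append, if_pos hlen,
    List.getElem?_map, List.getElem?_range' (show s - 1 < s' - 1 by omega)]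
  have h2 : 1 + 1 * (s - 1) = s := by omega
  rw [h2]
  simp

lemma blk_inj (c : ℕ → ℕ) {s s' b b' : ℕ} {r r' : List ℕ}
    (hs : 1 ≤ s) (hs' : 1 ≤ s') (hb : b < c s) (hb' : b' < c s')
    (h : blk c s b ++ r = blk c s' b' ++ r') : s = s' ∧ b = b' ∧ r = r' := by
  have hss : s = s' := by
    rcases lt_trichotomy s s' with h1 | h1 | h1
    · exfalso
      have e1 := getElem_blk_self c s b hs r
      have e2 := getElem_blk_lt c s s' b' h1 hs r'
      rw [h, e2] at e1
      simp only [Option.some.injEq] at e1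
      omega
    · exact h1
    · exfalso
      have e1 := getElem_blk_self c s' b' hs' r'
      have e2 := getElem_blk_lt c s' s b h1 hs' r
      rw [← h, e2] at e1
      simp only [Option.some.injEq] at e1
      omega
  subst hss
  have hlen : (blk c s b).length = (blk c s b').length := by
    rw [blk_length c s b hs, blk_length c s b' hs]
  obtain ⟨h1, h2⟩ := List.append_inj h hlen
  refine ⟨rfl, ?_, h2⟩
  simpa [blk] using h1

lemma mem_le_sup (L : ℕ) (c : ℕ → ℕ) {l : List ℕ} (h : IsSuperLegal L c l) :
    ∀ x ∈ l, x ≤ (Finset.Icc 1 L).sup c := by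
  induction h with
  | lastBlock s h1 h2 b hb z =>
    intro x hx
    rcases List.mem_append.mp hx with hx | hx
    · obtain ⟨i, hi, rfl⟩ := List.mem_map.mp hx
      obtain ⟨j, hj, rfl⟩ := List.mem_range'.mp hi
      exact Finset.le_sup (Finset.mem_Icc.mpr ⟨by omega, by omega⟩)
    · rcases List.mem_cons.mp hx with rfl | hx
      · exact le_trans (le_of_lt hb) (Finset.le_sup (Finset.mem_Icc.mpr ⟨h1, h2⟩))
      · rw [List.eq_of_mem_replicate hx]; exact Nat.zero_le _
  | consBlock s h1 h2 b hb z rest hrest ih =>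
    intro x hx
    rcases List.mem_append.mp hx with hx | hx
    · obtain ⟨i, hi, rfl⟩ := List.mem_map.mp hx
      obtain ⟨j, hj, rfl⟩ := List.mem_range'.mp hi
      exact Finset.le_sup (Finset.mem_Icc.mpr ⟨by omega, by omega⟩)
    · rcases List.mem_cons.mp hx with rfl | hx
      · exact le_trans (le_of_lt hb) (Finset.le_sup (Finset.mem_Icc.mpr ⟨h1, h2⟩))
      · rcases List.mem_append.mp hx with hx | hx
        · rw [List.eq_of_mem_replicate hx]; exact Nat.zero_le _
        · exact ih x hx

lemma finite_bdd (n M : ℕ) : {l : List ℕ | l.length = n ∧ ∀ x ∈ l, x ≤ M}.Finite := by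
  apply Set.Finite.subset (((List.finite_length_eq (Fin (M + 1)) n).image
    (fun l : List (Fin (M + 1)) => l.map Fin.val)))
  rintro l ⟨hlen, hmem⟩
  refine ⟨l.map (fun x => (⟨min x M, by omega⟩ : Fin (M + 1))), by simpa using hlen, ?_⟩
  show (l.map (fun x => (⟨min x M, by omega⟩ : Fin (M + 1)))).map Fin.val = l
  rw [List.map_map]
  have : ∀ x ∈ l, (Fin.val ∘ fun x => (⟨min x M, by omega⟩ : Fin (M + 1))) x = id x := by
    intro x hx
    simp [Nat.min_eq_left (hmem x hx)]
  rw [List.map_congr_left this, List.map_id]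

lemma finite_SL (L : ℕ) (c : ℕ → ℕ) (n : ℕ) :
    Finite {q : List ℕ // q.length = n ∧ IsSuperLegal L c q} := by
  have hsub : {l : List ℕ | l.length = n ∧ IsSuperLegal L c l} ⊆
      {l : List ℕ | l.length = n ∧ ∀ x ∈ l, x ≤ (Finset.Icc 1 L).sup c} := by
    rintro l ⟨h1, h2⟩
    exact ⟨h1, mem_le_sup L c h2⟩
  exact ((finite_bdd n _).subset hsub).to_subtype

lemma H_pos (L : ℕ) (c : ℕ → ℕ) (hL : 1 ≤ L) (hc1 : 1 ≤ c 1) (n : ℕ) (hn : 1 ≤ n) :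
    1 ≤ numSuperLegal L c n := by
  haveI := finite_SL L c n
  haveI : Nonempty {q : List ℕ // q.length = n ∧ IsSuperLegal L c q} := by
    refine ⟨⟨(List.range' 1 (1 - 1)).map c ++ 0 :: List.replicate (n - 1) 0, ?_,
      IsSuperLegal.lastBlock 1 le_rfl hL 0 hc1 (n - 1)⟩⟩
    simp; omega
  exact Nat.card_pos

lemma H_rec (L : ℕ) (c : ℕ → ℕ) (m : ℕ) (hm : L + 1 ≤ m) :
    ∑ s ∈ Finset.Icc 1 L, c s * numSuperLegal L c (m - s) ≤ numSuperLegal L c m := by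
  classical
  haveI hfin : ∀ k, Finite {q : List ℕ // q.length = k ∧ IsSuperLegal L c q} := finite_SL L c
  haveI : ∀ k, Fintype {q : List ℕ // q.length = k ∧ IsSuperLegal L c q} :=
    fun k => Fintype.ofFinite _
  let S : ℕ → Type := fun k => {q : List ℕ // q.length = k ∧ IsSuperLegal L c q}
  let T := Σ s : (Finset.Icc 1 L), Fin (c s.1) × S (m - s.1)
  have hmem : ∀ s : (Finset.Icc 1 L : Finset ℕ), 1 ≤ s.1 ∧ s.1 ≤ L :=
    fun s => Finset.mem_Icc.mp s.2
  let f : T → S m := fun x =>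
    ⟨blk c x.1.1 x.2.1.1 ++ x.2.2.1, by
      rw [List.length_append, blk_length c _ _ (hmem x.1).1, x.2.2.2.1]
      have := (hmem x.1).2; omega,
      isSuperLegal_blk_append L c (hmem x.1).1 (hmem x.1).2 x.2.1.2 x.2.2.2.2⟩
  have hf : Function.Injective f := by
    rintro ⟨⟨s, hs⟩, b, q⟩ ⟨⟨s', hs'⟩, b', q'⟩ h
    have h' : blk c s b.1 ++ q.1 = blk c s' b'.1 ++ q'.1 := congrArg Subtype.val h
    obtain ⟨h1, h2, h3⟩ := blk_inj c (Finset.mem_Icc.mp hs).1 (Finset.mem_Icc.mp hs').1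
      b.2 b'.2 h'
    subst h1
    have hb : b = b' := Fin.ext h2
    have hq : q = q' := Subtype.ext h3
    subst hb; subst hq
    rfl
  calc ∑ s ∈ Finset.Icc 1 L, c s * numSuperLegal L c (m - s)
      = Nat.card T := by
        rw [Nat.card_eq_fintype_card, Fintype.card_sigma,
          ← Finset.sum_coe_sort (Finset.Icc 1 L) (fun s => c s * numSuperLegal L c (m - s))]
        apply Finset.sum_congr rfl
        intro s _
        rw [Fintype.card_prod, Fintype.card_fin, numSuperLegal, Nat.card_eq_fintype_card]
    _ ≤ Nat.card (S m) := Nat.card_le_card_of_injective f hf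
    _ = numSuperLegal L c m := rfl

end SLAux

theorem numSuperLegal_ge_alpha_mul_G
    (L : ℕ) (c G : ℕ → ℕ)
    (hL : 1 ≤ L) (hc1 : 1 ≤ c 1) (hcL : 1 ≤ c L)
    (hGpos : ∀ i, 1 ≤ i → 1 ≤ G i)
    (hGrec : ∀ n, L ≤ n → G (n + 1) = ∑ i ∈ Finset.Icc 1 L, c i * G (n + 1 - i))
    (α : ℝ)
    (hα : α = (Finset.Icc 1 L).inf' (Finset.nonempty_Icc.mpr hL)
      (fun j => (numSuperLegal L c j : ℝ) / G j)) :
    0 < α ∧ ∀ n, 1 ≤ n → α * G n ≤ numSuperLegal L c n := by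
  have hHpos : ∀ n, 1 ≤ n → 1 ≤ numSuperLegal L c n := SLAux.H_pos L c hL hc1
  have hαpos : 0 < α := by
    rw [hα]
    rw [Finset.lt_inf'_iff]
    intro j hj
    obtain ⟨hj1, _⟩ := Finset.mem_Icc.mp hj
    have h1 : (0 : ℝ) < numSuperLegal L c j := by exact_mod_cast hHpos j hj1
    have h2 : (0 : ℝ) < G j := by exact_mod_cast hGpos j hj1
    exact div_pos h1 h2
  refine ⟨hαpos, ?_⟩
  intro n
  induction n using Nat.strong_induction_on with
  | _ n IH =>
    intro hn
    by_cases hcase : n ≤ L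
    · have hj : n ∈ Finset.Icc 1 L := Finset.mem_Icc.mpr ⟨hn, hcase⟩
      have h1 : α ≤ (numSuperLegal L c n : ℝ) / G n := by
        rw [hα]; exact Finset.inf'_le _ hj
      have hGn : (0 : ℝ) < G n := by exact_mod_cast hGpos n hn
      calc α * (G n : ℝ) ≤ ((numSuperLegal L c n : ℝ) / G n) * G n :=
            mul_le_mul_of_nonneg_right h1 hGn.le
        _ = numSuperLegal L c n := div_mul_cancel₀ _ hGn.ne'
    · push_neg at hcase
      have hrec := hGrec (n - 1) (by omega)
      have hn1 : n - 1 + 1 = n := by omega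
      rw [hn1] at hrec
      have hHrec := SLAux.H_rec L c n (by omega)
      calc α * (G n : ℝ)
          = ∑ i ∈ Finset.Icc 1 L, (c i : ℝ) * (α * G (n - i)) := by
            rw [hrec]; push_cast; rw [Finset.mul_sum]
            exact Finset.sum_congr rfl fun i _ => by ring
        _ ≤ ∑ i ∈ Finset.Icc 1 L, (c i : ℝ) * (numSuperLegal L c (n - i)) := by
            apply Finset.sum_le_sum
            intro i hi
            obtain ⟨hi1, hi2⟩ := Finset.mem_Icc.mp hi
            exact mul_le_mul_of_nonneg_left (IH (n - i) (by omega) (by omega))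
              (by positivity)
        _ ≤ numSuperLegal L c n := by
            have : ((∑ i ∈ Finset.Icc 1 L, c i * numSuperLegal L c (n - i) : ℕ) : ℝ)
                ≤ (numSuperLegal L c n : ℝ) := by exact_mod_cast hHrec
            calc ∑ i ∈ Finset.Icc 1 L, (c i : ℝ) * (numSuperLegal L c (n - i))
                = ((∑ i ∈ Finset.Icc 1 L, c i * numSuperLegal L c (n - i) : ℕ) : ℝ) := by
                  push_cast; rfl
              _ ≤ _ := this
end

section
/- Let {G_n} be a positive linear recurrence sequence. Let f(λ) = λ^L − c_1 λ^{L-1} − c_2 λ^{L-2} − ... − c_L be its characteristic polynomial. Then f has a unique positive real root λ_1, λ_1 strictly exceeds the absolute value of every other (complex) root of f, and there exists a constant A > 0 such that G_n = A λ_1^n + O(n^{L-2} |λ_2|^n), where λ_2 is a root of f of second-largest absolute value. -/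
open Finset Filter Asymptotics

open scoped Classical

open Polynomial

/-- The characteristic polynomial `z ^ L - c 1 * z ^ (L - 1) - ... - c L` of the
recurrence, as a function on `ℂ`. -/
noncomputable def charFun (L : ℕ) (c : ℕ → ℕ) (z : ℂ) : ℂ :=
  z ^ L - ∑ i ∈ Finset.Icc 1 L, (c i : ℂ) * z ^ (L - i)

noncomputable def polyOp {R : Type*} [Semiring R] (Q : R[X]) (E : ℕ → R) (n : ℕ) : R :=
  ∑ k ∈ Finset.range (Q.natDegree + 1), Q.coeff k * E (n + k)

lemma polyOp_X_sub_C_mul {R : Type*} [CommRing R] [Nontrivial R] (μ : R) (Q : R[X]) (hQ : Q.Monic)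
    (E : ℕ → R) (n : ℕ) :
    polyOp ((X - C μ) * Q) E n = polyOp Q E (n + 1) - μ * polyOp Q E n := by
  have hd : ((X - C μ) * Q).natDegree = Q.natDegree + 1 := by
    rw [(monic_X_sub_C μ).natDegree_mul hQ, natDegree_X_sub_C]; omega
  have hcoeff : ∀ k, ((X - C μ) * Q).coeff k = (X * Q).coeff k - μ * Q.coeff k := by
    intro k
    rw [sub_mul, coeff_sub, coeff_C_mul]
  unfold polyOp
  rw [hd]
  calc ∑ k ∈ Finset.range (Q.natDegree + 1 + 1), ((X - C μ) * Q).coeff k * E (n + k)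
      = ∑ k ∈ Finset.range (Q.natDegree + 1 + 1), ((X * Q).coeff k * E (n + k)
          - μ * (Q.coeff k * E (n + k))) := by
        apply Finset.sum_congr rfl
        intro k _
        rw [hcoeff k]; ring
    _ = ∑ k ∈ Finset.range (Q.natDegree + 1 + 1), (X * Q).coeff k * E (n + k)
          - μ * ∑ k ∈ Finset.range (Q.natDegree + 1 + 1), Q.coeff k * E (n + k) := by
        rw [Finset.sum_sub_distrib, Finset.mul_sum]
    _ = ∑ k ∈ Finset.range (Q.natDegree + 1), Q.coeff k * E (n + 1 + k)
          - μ * ∑ k ∈ Finset.range (Q.natDegree + 1), Q.coeff k * E (n + k) := by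
        congr 1
        · rw [Finset.sum_range_succ']
          simp only [coeff_X_mul]
          rw [mul_coeff_zero, coeff_X_zero, zero_mul, zero_mul, add_zero]
          apply Finset.sum_congr rfl
          intro k _
          congr 2
          omega
        · congr 1
          rw [Finset.sum_range_succ]
          rw [Polynomial.coeff_eq_zero_of_natDegree_lt (by omega), zero_mul, add_zero]

lemma jordan : ∀ (d : ℕ) (Q : ℂ[X]), Q.Monic → Q.natDegree = d →
    ∀ r : ℝ, 0 < r → (∀ z, Q.IsRoot z → ‖z‖ ≤ r) →
    ∀ E : ℕ → ℂ, (∀ n, 1 ≤ n → polyOp Q E n = 0) →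
    ∃ K : ℝ, 0 ≤ K ∧ (d = 0 → K = 0) ∧
      ∀ n, 1 ≤ n → ‖E n‖ ≤ K * (n : ℝ) ^ (d - 1) * r ^ n := by
  intro d
  induction d with
  | zero =>
    intro Q hQ hdeg r hr hroots E hE
    refine ⟨0, le_refl 0, fun _ => rfl, ?_⟩
    intro n hn
    have hQ1 : Q = 1 := hQ.natDegree_eq_zero.mp hdeg
    have : polyOp Q E n = E n := by
      simp [polyOp, hQ1]
    rw [hE n hn] at this
    simp [← this]
  | succ d ih =>
    intro Q hQ hdeg r hr hroots E hE
    have hdegpos : 0 < Q.degree := by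
      rw [Polynomial.natDegree_pos_iff_degree_pos.symm]
      omega
    obtain ⟨μ, hμ⟩ := Complex.exists_root hdegpos
    obtain ⟨S, hQS⟩ := dvd_iff_isRoot.mpr hμ
    have hSmon : S.Monic := (monic_X_sub_C μ).of_mul_monic_left (hQS ▸ hQ)
    have hSdeg : S.natDegree = d := by
      rw [hQS, (monic_X_sub_C μ).natDegree_mul hSmon, natDegree_X_sub_C] at hdeg
      omega
    have hμr : ‖μ‖ ≤ r := hroots μ hμ
    have hSroots : ∀ z, S.IsRoot z → ‖z‖ ≤ r := by
      intro z hz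
      apply hroots
      rw [IsRoot, hQS, eval_mul, hz]
      ring
    set F : ℕ → ℂ := fun n => E (n + 1) - μ * E n with hF
    have hSF : ∀ n, 1 ≤ n → polyOp S F n = 0 := by
      intro n hn
      have h1 : polyOp S F n = polyOp S E (n + 1) - μ * polyOp S E n := by
        unfold polyOp
        rw [Finset.mul_sum, ← Finset.sum_sub_distrib]
        apply Finset.sum_congr rfl
        intro k _
        have : n + 1 + k = n + k + 1 := by omega
        rw [this, hF]
        ring
      rw [h1, ← polyOp_X_sub_C_mul μ S hSmon, ← hQS]
      exact hE n hn
    obtain ⟨K, hK0, hKzero, hKb⟩ := ih S hSmon hSdeg r hr hSroots F hSF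
    refine ⟨(‖E 1‖ + K) / r, by positivity, fun h => absurd h (Nat.succ_ne_zero d), ?_⟩
    have key : ∀ n, 1 ≤ n → ‖E n‖ ≤
        r ^ (n - 1) * (‖E 1‖ + K * ∑ k ∈ Finset.Ico 1 n, (k : ℝ) ^ (d - 1)) := by
      intro n hn
      induction n, hn using Nat.le_induction with
      | base => simp
      | succ n hn ihn =>
        have hEn1 : E (n + 1) = μ * E n + F n := by rw [hF]; ring
        have step1 : ‖E (n + 1)‖ ≤ r * ‖E n‖ + ‖F n‖ := by
          rw [hEn1]
          refine (norm_add_le _ _).trans ?_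
          rw [norm_mul]
          have := norm_nonneg (E n)
          nlinarith [norm_nonneg (F n)]
        have hFb := hKb n hn
        have hsum : ∑ k ∈ Finset.Ico 1 (n + 1), (k : ℝ) ^ (d - 1)
            = (∑ k ∈ Finset.Ico 1 n, (k : ℝ) ^ (d - 1)) + (n : ℝ) ^ (d - 1) :=
          Finset.sum_Ico_succ_top hn _
        have hrn : r * r ^ (n - 1) = r ^ n := by
          rw [← pow_succ']
          congr 1
          omega
        have hEb : ‖E n‖ ≥ 0 := norm_nonneg _
        calc ‖E (n + 1)‖ ≤ r * ‖E n‖ + ‖F n‖ := step1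
          _ ≤ r * (r ^ (n - 1) * (‖E 1‖ + K * ∑ k ∈ Finset.Ico 1 n, (k : ℝ) ^ (d - 1)))
              + K * (n : ℝ) ^ (d - 1) * r ^ n := by
              have := mul_le_mul_of_nonneg_left ihn (le_of_lt hr)
              linarith
          _ = r ^ ((n + 1) - 1) * (‖E 1‖
              + K * ∑ k ∈ Finset.Ico 1 (n + 1), (k : ℝ) ^ (d - 1)) := by
              rw [hsum, ← mul_assoc, hrn]
              simp only [Nat.add_sub_cancel]
              ring
    intro n hn
    have hn1 : (1 : ℝ) ≤ (n : ℝ) := by exact_mod_cast hn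
    have hnd : (1 : ℝ) ≤ (n : ℝ) ^ d := one_le_pow₀ hn1
    have hinner : ‖E 1‖ + K * ∑ k ∈ Finset.Ico 1 n, (k : ℝ) ^ (d - 1)
        ≤ (‖E 1‖ + K) * (n : ℝ) ^ d := by
      rcases Nat.eq_zero_or_pos d with hd | hd
      · rw [hKzero hd, hd]
        simp
      · have hsb : ∑ k ∈ Finset.Ico 1 n, (k : ℝ) ^ (d - 1) ≤ (n : ℝ) ^ d := by
          calc ∑ k ∈ Finset.Ico 1 n, (k : ℝ) ^ (d - 1)
              ≤ ∑ k ∈ Finset.Ico 1 n, (n : ℝ) ^ (d - 1) := by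
                apply Finset.sum_le_sum
                intro k hk
                have hk' : (k : ℝ) ≤ (n : ℝ) := by
                  have := (Finset.mem_Ico.mp hk).2
                  exact_mod_cast le_of_lt this
                exact pow_le_pow_left₀ (by positivity) hk' _
            _ = ((Finset.Ico 1 n).card : ℝ) * (n : ℝ) ^ (d - 1) := by
                rw [Finset.sum_const, nsmul_eq_mul]
            _ ≤ (n : ℝ) * (n : ℝ) ^ (d - 1) := by
                apply mul_le_mul_of_nonneg_right _ (by positivity)
                rw [Nat.card_Ico]
                exact_mod_cast Nat.sub_le n 1
            _ = (n : ℝ) ^ d := by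
                rw [← pow_succ']
                congr 1
                omega
        have hE1 : ‖E 1‖ ≤ ‖E 1‖ * (n : ℝ) ^ d := by
          nlinarith [norm_nonneg (E 1)]
        nlinarith
    have hkey := key n hn
    have hrpow : r ^ (n - 1) = r ^ n / r := by
      rw [eq_div_iff (ne_of_gt hr), ← pow_succ]
      congr 1
      omega
    rw [hrpow] at hkey
    calc ‖E n‖ ≤ r ^ n / r * (‖E 1‖
            + K * ∑ k ∈ Finset.Ico 1 n, (k : ℝ) ^ (d - 1)) := hkey
      _ ≤ r ^ n / r * ((‖E 1‖ + K) * (n : ℝ) ^ d) := by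
          apply mul_le_mul_of_nonneg_left hinner (by positivity)
      _ = (‖E 1‖ + K) / r * (n : ℝ) ^ (d + 1 - 1) * r ^ n := by
          simp only [Nat.add_sub_cancel]
          ring

set_option maxHeartbeats 2000000 in
theorem generalized_binet
    (L : ℕ) (c G : ℕ → ℕ)
    (hL : 1 ≤ L) (hc1 : 1 ≤ c 1) (hcL : 1 ≤ c L)
    (hGpos : ∀ i, 1 ≤ i → 1 ≤ G i)
    (hGrec : ∀ n, L ≤ n → G (n + 1) = ∑ i ∈ Finset.Icc 1 L, c i * G (n + 1 - i))
 :
    ∃ lam1 : ℝ, 0 < lam1 ∧ charFun L c lam1 = 0 ∧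
      (∀ x : ℝ, 0 < x → charFun L c x = 0 → x = lam1) ∧
      (∀ z : ℂ, charFun L c z = 0 → z ≠ (lam1 : ℂ) → ‖z‖ < lam1) ∧
      ∃ A : ℝ, 0 < A ∧
        ∀ lam2 : ℂ, charFun L c lam2 = 0 → lam2 ≠ (lam1 : ℂ) →
          (∀ z : ℂ, charFun L c z = 0 → z ≠ (lam1 : ℂ) → ‖z‖ ≤ ‖lam2‖) →
          (fun n => (G n : ℝ) - A * lam1 ^ n)
            =O[Filter.atTop] (fun n => (n : ℝ) ^ (L - 2) * ‖lam2‖ ^ n) := by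
  have hL0 : L ≠ 0 := by omega
  set f : ℝ → ℝ := fun x => x ^ L - ∑ i ∈ Finset.Icc 1 L, (c i : ℝ) * x ^ (L - i) with hfdef
  have hcharR : ∀ x : ℝ, charFun L c ↑x = ((f x : ℝ) : ℂ) := by
    intro x
    simp only [charFun, hfdef]
    push_cast
    ring
  have hcomp : ∀ x y : ℝ, 0 < x → x < y → f x * y ^ L < f y * x ^ L := by
    intro x y hx hxy
    have hy : 0 < y := lt_trans hx hxy
    have h1 : f y * x ^ L - f x * y ^ L
        = ∑ i ∈ Finset.Icc 1 L, ((c i : ℝ) * x ^ (L - i) * y ^ L - (c i : ℝ) * y ^ (L - i) * x ^ L) := by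
      rw [Finset.sum_sub_distrib]
      simp only [hfdef]
      rw [← Finset.sum_mul, ← Finset.sum_mul]
      ring
    have h2 : ∀ i ∈ Finset.Icc 1 L, (c i : ℝ) * x ^ (L - i) * y ^ L - (c i : ℝ) * y ^ (L - i) * x ^ L
        = (c i : ℝ) * (x ^ (L - i) * y ^ (L - i) * (y ^ i - x ^ i)) := by
      intro i hi
      have hiL : i ≤ L := (Finset.mem_Icc.mp hi).2
      have hx' : x ^ L = x ^ (L - i) * x ^ i := by rw [← pow_add]; congr 1; omega
      have hy' : y ^ L = y ^ (L - i) * y ^ i := by rw [← pow_add]; congr 1; omega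
      rw [hx', hy']; ring
    rw [Finset.sum_congr rfl h2] at h1
    have h3 : 0 < ∑ i ∈ Finset.Icc 1 L, (c i : ℝ) * (x ^ (L - i) * y ^ (L - i) * (y ^ i - x ^ i)) := by
      apply Finset.sum_pos'
      · intro i hi
        have hpi : x ^ i ≤ y ^ i := pow_le_pow_left₀ hx.le hxy.le i
        have hxp : (0:ℝ) < x ^ (L - i) := pow_pos hx _
        have hyp : (0:ℝ) < y ^ (L - i) := pow_pos hy _
        have hci : (0:ℝ) ≤ c i := Nat.cast_nonneg _
        have h6 : (0:ℝ) ≤ x ^ (L - i) * y ^ (L - i) * (y ^ i - x ^ i) :=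
          mul_nonneg (mul_pos hxp hyp).le (by linarith)
        exact mul_nonneg hci h6
      · refine ⟨1, Finset.mem_Icc.mpr ⟨le_refl 1, hL⟩, ?_⟩
        have hc1' : (1:ℝ) ≤ (c 1 : ℝ) := by exact_mod_cast hc1
        have h4 : x ^ 1 < y ^ 1 := by simpa using hxy
        have hxp : (0:ℝ) < x ^ (L - 1) := pow_pos hx _
        have hyp : (0:ℝ) < y ^ (L - 1) := pow_pos hy _
        have h5 : (0:ℝ) < x ^ (L - 1) * y ^ (L - 1) * (y ^ 1 - x ^ 1) :=
          mul_pos (mul_pos hxp hyp) (by linarith)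
        nlinarith
    linarith
  -- f (1/2) < 0
  have hhalf : f (1/2 : ℝ) < 0 := by
    have hsum : (c L : ℝ) ≤ ∑ i ∈ Finset.Icc 1 L, (c i : ℝ) * (1/2 : ℝ) ^ (L - i) := by
      have he : (c L : ℝ) * (1/2 : ℝ) ^ (L - L) = (c L : ℝ) := by simp
      rw [← he]
      apply Finset.single_le_sum (f := fun i => (c i : ℝ) * (1/2 : ℝ) ^ (L - i))
        (fun i _ => by positivity) (Finset.mem_Icc.mpr ⟨hL, le_refl L⟩)
    have hpow : ((1:ℝ)/2) ^ L ≤ 1/2 := by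
      calc ((1:ℝ)/2) ^ L ≤ (1/2 : ℝ) ^ 1 :=
        pow_le_pow_of_le_one (by norm_num) (by norm_num) hL
      _ = 1/2 := pow_one _
    have hcL' : (1:ℝ) ≤ (c L : ℝ) := by exact_mod_cast hcL
    simp only [hfdef]
    linarith
  set S : ℝ := ∑ i ∈ Finset.Icc 1 L, (c i : ℝ) with hSdef
  have hS1 : 1 ≤ S := by
    have : (c 1 : ℝ) ≤ S :=
      Finset.single_le_sum (f := fun i => (c i : ℝ)) (fun i _ => Nat.cast_nonneg _)
        (Finset.mem_Icc.mpr ⟨le_refl 1, hL⟩)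
    have hc1' : (1:ℝ) ≤ (c 1 : ℝ) := by exact_mod_cast hc1
    linarith
  have hStop : 0 < f (S + 1) := by
    have hx1 : (1:ℝ) ≤ S + 1 := by linarith
    have hb : ∑ i ∈ Finset.Icc 1 L, (c i : ℝ) * (S + 1) ^ (L - i) ≤ S * (S + 1) ^ (L - 1) := by
      rw [hSdef, Finset.sum_mul]
      apply Finset.sum_le_sum
      intro i hi
      have hi1 : 1 ≤ i := (Finset.mem_Icc.mp hi).1
      have hple : (S + 1) ^ (L - i) ≤ (S + 1) ^ (L - 1) :=
        pow_le_pow_right₀ hx1 (by omega)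
      have : (0:ℝ) ≤ c i := Nat.cast_nonneg _
      nlinarith
    have hLL : (S + 1) ^ L = (S + 1) ^ (L - 1) * (S + 1) := by
      rw [← pow_succ]; congr 1; omega
    have hp : (0:ℝ) < (S + 1) ^ (L - 1) := by positivity
    simp only [hfdef]
    nlinarith
  have hcont : ContinuousOn f (Set.Icc (1/2 : ℝ) (S + 1)) := by
    apply Continuous.continuousOn
    apply Continuous.sub (continuous_pow L)
    exact continuous_finset_sum _ fun i _ => continuous_const.mul (continuous_pow _)
  obtain ⟨lam1, hmem, hroot⟩ : ∃ x ∈ Set.Icc (1/2 : ℝ) (S + 1), f x = 0 := by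
    have h0 : (0:ℝ) ∈ Set.Icc (f (1/2)) (f (S + 1)) := ⟨le_of_lt hhalf, le_of_lt hStop⟩
    have him := intermediate_value_Icc (by linarith : (1/2:ℝ) ≤ S + 1) hcont
    obtain ⟨x, hx, hfx⟩ := him h0
    exact ⟨x, hx, hfx⟩
  have hl1pos : 0 < lam1 := lt_of_lt_of_le (by norm_num) hmem.1
  have hlt : ∀ x : ℝ, 0 < x → x < lam1 → f x < 0 := by
    intro x hx hxl
    have := hcomp x lam1 hx hxl
    rw [hroot] at this
    nlinarith [pow_pos hl1pos L, pow_pos hx L]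
  have hgt : ∀ x : ℝ, lam1 < x → 0 < f x := by
    intro x hxl
    have := hcomp lam1 x hl1pos hxl
    rw [hroot] at this
    nlinarith [pow_pos hl1pos L]
  have huniq : ∀ x : ℝ, 0 < x → f x = 0 → x = lam1 := by
    intro x hx hfx
    rcases lt_trichotomy x lam1 with h | h | h
    · exact absurd hfx (ne_of_lt (hlt x hx h))
    · exact h
    · exact absurd hfx.symm (ne_of_lt (hgt x h))
  have hrooteq : lam1 ^ L = ∑ i ∈ Finset.Icc 1 L, (c i : ℝ) * lam1 ^ (L - i) := by
    have h := hroot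
    simp only [hfdef] at h
    linarith
  have hl1ge1 : 1 ≤ lam1 := by
    by_contra hcon
    push_neg at hcon
    have h1 : lam1 ^ L < 1 := pow_lt_one₀ hl1pos.le hcon hL0
    have h2 : (c L : ℝ) ≤ ∑ i ∈ Finset.Icc 1 L, (c i : ℝ) * lam1 ^ (L - i) := by
      have he : (c L : ℝ) * lam1 ^ (L - L) = (c L : ℝ) := by simp
      rw [← he]
      apply Finset.single_le_sum (f := fun i => (c i : ℝ) * lam1 ^ (L - i))
        (fun i _ => by positivity) (Finset.mem_Icc.mpr ⟨hL, le_refl L⟩)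
    have hcL' : (1:ℝ) ≤ (c L : ℝ) := by exact_mod_cast hcL
    linarith [hrooteq]
  have hchar0 : ∀ z : ℂ, charFun L c z = 0 → z ≠ 0 := by
    intro z hz h0
    subst h0
    simp only [charFun, zero_pow hL0, zero_sub, neg_eq_zero] at hz
    rw [Finset.sum_eq_single L] at hz
    · simp only [Nat.sub_self, pow_zero, mul_one, Nat.cast_eq_zero] at hz
      omega
    · intro i hi hne
      have hi2 := Finset.mem_Icc.mp hi
      have : L - i ≠ 0 := by omega
      simp [zero_pow this]
    · intro h
      exact absurd (Finset.mem_Icc.mpr ⟨hL, le_refl L⟩) h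
  have hdom : ∀ z : ℂ, charFun L c z = 0 → z ≠ (lam1 : ℂ) → ‖z‖ < lam1 := by
    intro z hz hne
    have hz0 : z ≠ 0 := hchar0 z hz
    have habs : 0 < ‖z‖ := norm_pos_iff.mpr hz0
    have hzeq : z ^ L = ∑ i ∈ Finset.Icc 1 L, (c i : ℂ) * z ^ (L - i) := by
      simp only [charFun] at hz
      rw [sub_eq_zero] at hz
      exact hz
    set s : ℝ := ‖z‖ with hs
    have hineq : s ^ L ≤ ∑ i ∈ Finset.Icc 1 L, (c i : ℝ) * s ^ (L - i) := by
      calc s ^ L = ‖z ^ L‖ := by rw [norm_pow]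
        _ = ‖∑ i ∈ Finset.Icc 1 L, (c i : ℂ) * z ^ (L - i)‖ := by rw [hzeq]
        _ ≤ ∑ i ∈ Finset.Icc 1 L, ‖(c i : ℂ) * z ^ (L - i)‖ :=
            norm_sum_le _ _
        _ = ∑ i ∈ Finset.Icc 1 L, (c i : ℝ) * s ^ (L - i) := by
            apply Finset.sum_congr rfl
            intro i _
            rw [norm_mul, norm_pow, Complex.norm_natCast]
    have hfabs : f s ≤ 0 := by
      simp only [hfdef]
      linarith
    rcases lt_trichotomy s lam1 with h | h | h
    · exact h
    · exfalso
      -- equality case: all terms aligned, z must be real positive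
      have hseq : s ^ L = ∑ i ∈ Finset.Icc 1 L, (c i : ℝ) * s ^ (L - i) := by
        have hfs : f s = 0 := by rw [h]; exact hroot
        simp only [hfdef] at hfs
        linarith
      have hterm : ∀ i ∈ Finset.Icc 1 L,
          ((c i : ℂ) * z ^ (L - i) * (starRingEnd ℂ) (z ^ L)).re ≤ (c i : ℝ) * s ^ (L - i) * s ^ L := by
        intro i _
        refine (Complex.re_le_norm _).trans ?_
        rw [norm_mul, norm_mul, norm_pow, Complex.norm_natCast, Complex.norm_conj, norm_pow]
      have hsumeq : ∑ i ∈ Finset.Icc 1 L, ((c i : ℂ) * z ^ (L - i) * (starRingEnd ℂ) (z ^ L)).re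
          = ∑ i ∈ Finset.Icc 1 L, (c i : ℝ) * s ^ (L - i) * s ^ L := by
        have hL1 : ∑ i ∈ Finset.Icc 1 L, ((c i : ℂ) * z ^ (L - i) * (starRingEnd ℂ) (z ^ L)).re
            = ((∑ i ∈ Finset.Icc 1 L, (c i : ℂ) * z ^ (L - i)) * (starRingEnd ℂ) (z ^ L)).re := by
          rw [Finset.sum_mul, Complex.re_sum]
        have hR1 : ∑ i ∈ Finset.Icc 1 L, (c i : ℝ) * s ^ (L - i) * s ^ L
            = (∑ i ∈ Finset.Icc 1 L, (c i : ℝ) * s ^ (L - i)) * s ^ L := by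
          rw [Finset.sum_mul]
        rw [hL1, hR1, ← hzeq, ← hseq, Complex.mul_conj, Complex.ofReal_re,
          Complex.normSq_eq_norm_sq, norm_pow, ← hs]
        ring
      have heach := (Finset.sum_eq_sum_iff_of_le hterm).mp hsumeq
      have h1mem : (1 : ℕ) ∈ Finset.Icc 1 L := Finset.mem_Icc.mpr ⟨le_refl 1, hL⟩
      have heq1 := heach 1 h1mem
      -- v := z^(L-1) * conj (z^L)
      set v : ℂ := z ^ (L - 1) * (starRingEnd ℂ) (z ^ L) with hv
      have hre : ((c 1 : ℂ) * z ^ (L - 1) * (starRingEnd ℂ) (z ^ L)).re = (c 1 : ℝ) * v.re := by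
        have : (c 1 : ℂ) * z ^ (L - 1) * (starRingEnd ℂ) (z ^ L) = ((c 1 : ℝ) : ℂ) * v := by
          rw [hv]; push_cast; ring
        rw [this, Complex.re_ofReal_mul]
      rw [hre] at heq1
      have hc1pos : (0:ℝ) < (c 1 : ℝ) := by exact_mod_cast hc1
      have hvre : v.re = s ^ (L - 1) * s ^ L := by
        have h' : (c 1 : ℝ) * v.re = (c 1 : ℝ) * (s ^ (L - 1) * s ^ L) := by
          rw [heq1]; ring
        exact mul_left_cancel₀ (ne_of_gt hc1pos) h'
      have hvabs : ‖v‖ = s ^ (L - 1) * s ^ L := by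
        rw [hv, norm_mul, norm_pow, Complex.norm_conj, norm_pow]
      have hvim : v.im = 0 := by
        have h1 : v.re ^ 2 + v.im ^ 2 = ‖v‖ ^ 2 := by
          rw [Complex.sq_norm, Complex.normSq_apply]; ring
        rw [hvre, hvabs] at h1
        nlinarith [sq_nonneg v.im]
      have hveq : v = ((s ^ (L - 1) * s ^ L : ℝ) : ℂ) :=
        Complex.ext (by rw [hvre, Complex.ofReal_re]) (by rw [hvim, Complex.ofReal_im])
      have hmul : v * z = ((s ^ L * s ^ L : ℝ) : ℂ) := by
        have h1 : v * z = z ^ L * (starRingEnd ℂ) (z ^ L) := by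
          rw [hv]
          have h2 : z ^ (L - 1) * z = z ^ L := by
            rw [← pow_succ]; congr 1; omega
          calc z ^ (L - 1) * (starRingEnd ℂ) (z ^ L) * z
              = z ^ (L - 1) * z * (starRingEnd ℂ) (z ^ L) := by ring
            _ = z ^ L * (starRingEnd ℂ) (z ^ L) := by rw [h2]
        rw [h1, Complex.mul_conj]
        norm_cast
        rw [Complex.normSq_eq_norm_sq, norm_pow, ← hs]
        ring
      have hzval : z = (s : ℂ) := by
        have hne0 : ((s ^ (L - 1) * s ^ L : ℝ) : ℂ) ≠ 0 := by
          simp only [Ne, Complex.ofReal_eq_zero]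
          positivity
        have h2 : ((s ^ (L - 1) * s ^ L : ℝ) : ℂ) * z = ((s ^ (L - 1) * s ^ L : ℝ) : ℂ) * (s : ℂ) := by
          calc ((s ^ (L - 1) * s ^ L : ℝ) : ℂ) * z = v * z := by rw [← hveq]
            _ = ((s ^ L * s ^ L : ℝ) : ℂ) := hmul
            _ = ((s ^ (L - 1) * s ^ L : ℝ) : ℂ) * (s : ℂ) := by
                norm_cast
                have hpow : s ^ (L - 1) * s = s ^ L := by
                  rw [← pow_succ]; congr 1; omega
                rw [← hpow]; ring
        exact mul_left_cancel₀ hne0 h2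
      exact hne (by rw [hzval, h])
    · exact absurd hfabs (not_le.mpr (hgt s h))
  -- polynomial setup
  set Pr : Polynomial ℝ := Polynomial.X ^ L
      - ∑ i ∈ Finset.Icc 1 L, Polynomial.C (c i : ℝ) * Polynomial.X ^ (L - i) with hPrdef
  have hPreval : ∀ x : ℝ, Pr.eval x = f x := by
    intro x
    simp [hPrdef, hfdef, Polynomial.eval_finset_sum]
  have hPrmonic : Pr.Monic := by
    rw [hPrdef]
    have hL' : (Polynomial.X : Polynomial ℝ) ^ L = (Polynomial.X : Polynomial ℝ) ^ ((L - 1) + 1) := by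
      congr 1; omega
    rw [hL']
    apply Polynomial.monic_X_pow_sub
    have hdegsum : (∑ i ∈ Finset.Icc 1 L, Polynomial.C (c i : ℝ) * Polynomial.X ^ (L - i)).degree
        ≤ ((L - 1 : ℕ) : WithBot ℕ) := by
      apply (Polynomial.degree_sum_le _ _).trans
      apply Finset.sup_le
      intro i hi
      apply (Polynomial.degree_C_mul_X_pow_le _ _).trans
      have hi1 : 1 ≤ i := (Finset.mem_Icc.mp hi).1
      exact_mod_cast (by omega : L - i ≤ L - 1)
    refine lt_of_le_of_lt hdegsum ?_
    exact_mod_cast (by omega : L - 1 < L - 1 + 1)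
  have hPrdeg : Pr.natDegree = L := by
    rw [hPrdef]
    have h1 : (∑ i ∈ Finset.Icc 1 L, Polynomial.C (c i : ℝ) * Polynomial.X ^ (L - i)).natDegree
        < ((Polynomial.X : Polynomial ℝ) ^ L).natDegree := by
      rw [Polynomial.natDegree_X_pow]
      have h2 : (∑ i ∈ Finset.Icc 1 L, Polynomial.C (c i : ℝ) * Polynomial.X ^ (L - i)).natDegree
          ≤ L - 1 := by
        apply Polynomial.natDegree_sum_le_of_forall_le
        intro i hi
        refine (Polynomial.natDegree_C_mul_le _ _).trans ?_
        rw [Polynomial.natDegree_X_pow]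
        have hi1 : 1 ≤ i := (Finset.mem_Icc.mp hi).1
        omega
      omega
    rw [Polynomial.natDegree_sub_eq_left_of_natDegree_lt h1, Polynomial.natDegree_X_pow]
  set Pc : Polynomial ℂ := Pr.map (algebraMap ℝ ℂ) with hPcdef
  have hPceval : ∀ z : ℂ, Pc.eval z = charFun L c z := by
    intro z
    rw [hPcdef, hPrdef]
    simp only [Polynomial.map_sub, Polynomial.map_pow, Polynomial.map_X, Polynomial.map_sum,
      Polynomial.map_mul, Polynomial.map_C, Polynomial.eval_sub, Polynomial.eval_pow,
      Polynomial.eval_X, Polynomial.eval_finset_sum, Polynomial.eval_mul, Polynomial.eval_C,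
      charFun, Complex.coe_algebraMap]
    push_cast
    ring
  have hPop : ∀ (E : ℕ → ℝ) (m : ℕ), polyOp Pr E m
      = E (m + L) - ∑ i ∈ Finset.Icc 1 L, (c i : ℝ) * E (m + (L - i)) := by
    intro E m
    unfold polyOp
    rw [hPrdeg]
    have hco : ∀ k, Pr.coeff k = ((Polynomial.X : Polynomial ℝ) ^ L).coeff k
        - ∑ i ∈ Finset.Icc 1 L, (c i : ℝ) * ((Polynomial.X : Polynomial ℝ) ^ (L - i)).coeff k := by
      intro k
      rw [hPrdef, Polynomial.coeff_sub, Polynomial.finset_sum_coeff]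
      congr 1
      apply Finset.sum_congr rfl
      intro i _
      rw [Polynomial.coeff_C_mul]
    calc ∑ k ∈ Finset.range (L + 1), Pr.coeff k * E (m + k)
        = ∑ k ∈ Finset.range (L + 1), (((Polynomial.X : Polynomial ℝ) ^ L).coeff k * E (m + k)
            - ∑ i ∈ Finset.Icc 1 L, (c i : ℝ) * ((Polynomial.X : Polynomial ℝ) ^ (L - i)).coeff k * E (m + k)) := by
          apply Finset.sum_congr rfl
          intro k _
          rw [hco k, sub_mul, Finset.sum_mul]
      _ = ∑ k ∈ Finset.range (L + 1), ((Polynomial.X : Polynomial ℝ) ^ L).coeff k * E (m + k)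
            - ∑ k ∈ Finset.range (L + 1), ∑ i ∈ Finset.Icc 1 L,
              (c i : ℝ) * ((Polynomial.X : Polynomial ℝ) ^ (L - i)).coeff k * E (m + k) := by
          rw [Finset.sum_sub_distrib]
      _ = E (m + L) - ∑ i ∈ Finset.Icc 1 L, (c i : ℝ) * E (m + (L - i)) := by
          congr 1
          · rw [Finset.sum_eq_single L]
            · simp [Polynomial.coeff_X_pow]
            · intro k hk hne
              simp [Polynomial.coeff_X_pow, hne]
            · intro hcon
              exact absurd (Finset.self_mem_range_succ L) hcon
          · rw [Finset.sum_comm]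
            apply Finset.sum_congr rfl
            intro i hi
            have hiL : i ≤ L := (Finset.mem_Icc.mp hi).2
            rw [Finset.sum_eq_single (L - i)]
            · simp [Polynomial.coeff_X_pow]
            · intro k hk hne
              simp [Polynomial.coeff_X_pow, hne]
            · intro hcon
              exact absurd (Finset.mem_range.mpr (by omega)) hcon
  set Gr : ℕ → ℝ := fun n => (G n : ℝ) with hGrdef
  have hPzero : ∀ m, 1 ≤ m → polyOp Pr Gr m = 0 := by
    intro m hm
    rw [hPop]
    have hrec := hGrec (m + L - 1) (by omega)
    have h1 : m + L - 1 + 1 = m + L := by omega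
    rw [h1] at hrec
    rw [sub_eq_zero, hGrdef]
    simp only []
    rw [hrec]
    push_cast
    apply Finset.sum_congr rfl
    intro i hi
    have hiL : i ≤ L := (Finset.mem_Icc.mp hi).2
    rw [show m + L - i = m + (L - i) by omega]
  -- factor out (X - lam1)
  have hroot' : Pr.IsRoot lam1 := by rw [Polynomial.IsRoot, hPreval]; exact hroot
  obtain ⟨Q, hPQ⟩ := Polynomial.dvd_iff_isRoot.mpr hroot'
  have hPQmon : ((Polynomial.X - Polynomial.C lam1) * Q).Monic := by
    rw [← hPQ]; exact hPrmonic
  have hQmon : Q.Monic := (Polynomial.monic_X_sub_C lam1).of_mul_monic_left hPQmon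
  have hQdeg : Q.natDegree = L - 1 := by
    have h : ((Polynomial.X - Polynomial.C lam1) * Q).natDegree = L := by rw [← hPQ]; exact hPrdeg
    rw [(Polynomial.monic_X_sub_C lam1).natDegree_mul hQmon,
      Polynomial.natDegree_X_sub_C] at h
    omega
  have hQeval_eq : Q.eval lam1 = (Polynomial.derivative Pr).eval lam1 := by
    rw [hPQ, Polynomial.derivative_mul, Polynomial.derivative_X_sub_C, one_mul,
      Polynomial.eval_add, Polynomial.eval_mul, Polynomial.eval_sub, Polynomial.eval_X,
      Polynomial.eval_C]
    ring
  have hdeval : (Polynomial.derivative Pr).eval lam1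
      = (L : ℝ) * lam1 ^ (L - 1)
        - ∑ i ∈ Finset.Icc 1 L, (c i : ℝ) * (((L - i : ℕ) : ℝ) * lam1 ^ (L - i - 1)) := by
    simp only [hPrdef, Polynomial.derivative_sub, Polynomial.derivative_X_pow,
      Polynomial.derivative_sum, Polynomial.derivative_C_mul, Polynomial.eval_sub,
      Polynomial.eval_finset_sum, Polynomial.eval_mul, Polynomial.eval_C, Polynomial.eval_pow,
      Polynomial.eval_X]
  have hstep : ∀ i ∈ Finset.Icc 1 L,
      lam1 * ((c i : ℝ) * (((L - i : ℕ) : ℝ) * lam1 ^ (L - i - 1)))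
        = (c i : ℝ) * (((L - i : ℕ) : ℝ) * lam1 ^ (L - i)) := by
    intro i hi
    have hiL : i ≤ L := (Finset.mem_Icc.mp hi).2
    rcases eq_or_lt_of_le hiL with h | h
    · subst h
      simp
    · have hp : lam1 ^ (L - i - 1) * lam1 = lam1 ^ (L - i) := by
        rw [← pow_succ]
        congr 1
        omega
      calc lam1 * ((c i : ℝ) * (((L - i : ℕ) : ℝ) * lam1 ^ (L - i - 1)))
          = (c i : ℝ) * (((L - i : ℕ) : ℝ) * (lam1 ^ (L - i - 1) * lam1)) := by ring
        _ = (c i : ℝ) * (((L - i : ℕ) : ℝ) * lam1 ^ (L - i)) := by rw [hp]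
  have hder1 : lam1 * (Polynomial.derivative Pr).eval lam1
      = ∑ i ∈ Finset.Icc 1 L, (i : ℝ) * (c i : ℝ) * lam1 ^ (L - i) := by
    have hpl : lam1 * ((L : ℝ) * lam1 ^ (L - 1)) = (L : ℝ) * lam1 ^ L := by
      have hp : lam1 ^ (L - 1) * lam1 = lam1 ^ L := by
        rw [← pow_succ]
        congr 1
        omega
      calc lam1 * ((L : ℝ) * lam1 ^ (L - 1)) = (L : ℝ) * (lam1 ^ (L - 1) * lam1) := by ring
        _ = (L : ℝ) * lam1 ^ L := by rw [hp]
    calc lam1 * (Polynomial.derivative Pr).eval lam1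
        = lam1 * ((L : ℝ) * lam1 ^ (L - 1))
          - ∑ i ∈ Finset.Icc 1 L, lam1 * ((c i : ℝ) * (((L - i : ℕ) : ℝ) * lam1 ^ (L - i - 1))) := by
          rw [hdeval, mul_sub, Finset.mul_sum]
      _ = (L : ℝ) * lam1 ^ L
          - ∑ i ∈ Finset.Icc 1 L, (c i : ℝ) * (((L - i : ℕ) : ℝ) * lam1 ^ (L - i)) := by
          rw [hpl, Finset.sum_congr rfl hstep]
      _ = (L : ℝ) * (∑ i ∈ Finset.Icc 1 L, (c i : ℝ) * lam1 ^ (L - i))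
          - ∑ i ∈ Finset.Icc 1 L, (c i : ℝ) * (((L - i : ℕ) : ℝ) * lam1 ^ (L - i)) := by
          rw [← hrooteq]
      _ = ∑ i ∈ Finset.Icc 1 L, ((L : ℝ) * ((c i : ℝ) * lam1 ^ (L - i))
            - (c i : ℝ) * (((L - i : ℕ) : ℝ) * lam1 ^ (L - i))) := by
          rw [Finset.sum_sub_distrib, Finset.mul_sum]
      _ = ∑ i ∈ Finset.Icc 1 L, (i : ℝ) * (c i : ℝ) * lam1 ^ (L - i) := by
          apply Finset.sum_congr rfl
          intro i hi
          have hiL : i ≤ L := (Finset.mem_Icc.mp hi).2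
          have hcast : ((L - i : ℕ) : ℝ) = (L : ℝ) - (i : ℝ) := by
            rw [Nat.cast_sub hiL]
          rw [hcast]
          ring
  have hderivpos : 0 < (Polynomial.derivative Pr).eval lam1 := by
    have hsumpos : 0 < ∑ i ∈ Finset.Icc 1 L, (i : ℝ) * (c i : ℝ) * lam1 ^ (L - i) := by
      apply Finset.sum_pos'
      · intro i hi
        have hi1 : 1 ≤ i := (Finset.mem_Icc.mp hi).1
        have : (0:ℝ) ≤ (i:ℝ) := Nat.cast_nonneg _
        positivity
      · refine ⟨1, Finset.mem_Icc.mpr ⟨le_refl 1, hL⟩, ?_⟩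
        have hc1' : (1:ℝ) ≤ (c 1 : ℝ) := by exact_mod_cast hc1
        have hp := pow_pos hl1pos (L - 1)
        simp only [Nat.cast_one, one_mul]
        exact mul_pos (lt_of_lt_of_le one_pos hc1') hp
    nlinarith [hder1]
  have hQne : Q.eval lam1 ≠ 0 := by rw [hQeval_eq]; exact ne_of_gt hderivpos
  -- the reduced sequence D
  set D : ℕ → ℝ := polyOp Q Gr with hDdef
  have hDrec : ∀ m, 1 ≤ m → D (m + 1) = lam1 * D m := by
    intro m hm
    have h0 : polyOp ((Polynomial.X - Polynomial.C lam1) * Q) Gr m = 0 := by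
      rw [← hPQ]; exact hPzero m hm
    rw [polyOp_X_sub_C_mul lam1 Q hQmon Gr m] at h0
    have h1 := sub_eq_zero.mp h0
    rw [hDdef]
    exact h1
  set Cst : ℝ := D 1 / lam1 with hCstdef
  have hDval : ∀ m, 1 ≤ m → D m = Cst * lam1 ^ m := by
    intro m hm
    induction m, hm using Nat.le_induction with
    | base =>
      rw [hCstdef]
      field_simp
    | succ m hm ih =>
      rw [hDrec m hm, ih, pow_succ]
      ring
  set A : ℝ := Cst / Q.eval lam1 with hAdef
  set E : ℕ → ℝ := fun n => Gr n - A * lam1 ^ n with hEdef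
  have hQE : ∀ m, 1 ≤ m → polyOp Q E m = 0 := by
    intro m hm
    have hsplit : polyOp Q E m = polyOp Q Gr m
        - A * (lam1 ^ m * ∑ k ∈ Finset.range (Q.natDegree + 1), Q.coeff k * lam1 ^ k) := by
      unfold polyOp
      rw [Finset.mul_sum, Finset.mul_sum, ← Finset.sum_sub_distrib]
      apply Finset.sum_congr rfl
      intro k _
      rw [hEdef]
      simp only []
      rw [pow_add]
      ring
    have heval : ∑ k ∈ Finset.range (Q.natDegree + 1), Q.coeff k * lam1 ^ k = Q.eval lam1 :=
      (Polynomial.eval_eq_sum_range _).symm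
    have hAQ : A * Q.eval lam1 = Cst := by
      rw [hAdef]
      field_simp
    rw [hsplit, heval, ← hDdef]
    calc D m - A * (lam1 ^ m * Q.eval lam1)
        = D m - (A * Q.eval lam1) * lam1 ^ m := by ring
      _ = Cst * lam1 ^ m - Cst * lam1 ^ m := by rw [hAQ, hDval m hm]
      _ = 0 := sub_self _
  -- complex transfer
  set Qc : Polynomial ℂ := Q.map (algebraMap ℝ ℂ) with hQcdef
  have hQcmon : Qc.Monic := hQmon.map _
  have hQcdeg : Qc.natDegree = L - 1 := by
    rw [hQcdef, hQmon.natDegree_map]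
    exact hQdeg
  have hPcQc : Pc = (Polynomial.X - Polynomial.C ((lam1 : ℝ) : ℂ)) * Qc := by
    rw [hPcdef, hPQ, Polynomial.map_mul, Polynomial.map_sub, Polynomial.map_X, Polynomial.map_C,
      hQcdef, Complex.coe_algebraMap]
  have hQceval1 : Qc.eval ((lam1 : ℝ) : ℂ) = ((Q.eval lam1 : ℝ) : ℂ) := by
    rw [hQcdef, ← Complex.coe_algebraMap, Polynomial.eval_map, Polynomial.eval₂_at_apply]
  have hQcroot : ∀ z : ℂ, Qc.IsRoot z → charFun L c z = 0 ∧ z ≠ ((lam1 : ℝ) : ℂ) := by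
    intro z hz
    rw [Polynomial.IsRoot] at hz
    constructor
    · rw [← hPceval, hPcQc, Polynomial.eval_mul, hz, mul_zero]
    · intro hcon
      rw [hcon, hQceval1] at hz
      exact hQne (by exact_mod_cast hz)
  set Ec : ℕ → ℂ := fun n => ((E n : ℝ) : ℂ) with hEcdef
  have hEc : ∀ m, 1 ≤ m → polyOp Qc Ec m = 0 := by
    intro m hm
    have h1 : polyOp Qc Ec m = ((polyOp Q E m : ℝ) : ℂ) := by
      unfold polyOp
      rw [show Qc.natDegree = Q.natDegree by rw [hQcdeg, hQdeg]]
      push_cast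
      apply Finset.sum_congr rfl
      intro k _
      rw [hQcdef, Polynomial.coeff_map, Complex.coe_algebraMap, hEcdef]
    rw [h1, hQE m hm, Complex.ofReal_zero]
  -- lower bound for G
  have hIccne : (Finset.Icc 1 L).Nonempty := ⟨1, Finset.mem_Icc.mpr ⟨le_refl 1, hL⟩⟩
  set del : ℝ := (Finset.Icc 1 L).inf' hIccne (fun j => Gr j / lam1 ^ j) with hdeldef
  have hdelpos : 0 < del := by
    rw [hdeldef, Finset.lt_inf'_iff]
    intro j hj
    have hj1 : 1 ≤ j := (Finset.mem_Icc.mp hj).1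
    have hGj : (1:ℝ) ≤ Gr j := by
      show (1:ℝ) ≤ ((G j : ℕ) : ℝ)
      exact_mod_cast hGpos j hj1
    have hp := pow_pos hl1pos j
    exact div_pos (by linarith) hp
  have hGlow : ∀ n, 1 ≤ n → del * lam1 ^ n ≤ Gr n := by
    intro n
    induction n using Nat.strong_induction_on with
    | _ n ih =>
      intro hn
      rcases le_or_gt n L with hnL | hnL
      · have hd : del ≤ Gr n / lam1 ^ n :=
          Finset.inf'_le _ (Finset.mem_Icc.mpr ⟨hn, hnL⟩)
        rw [le_div_iff₀ (pow_pos hl1pos n)] at hd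
        exact hd
      · have hrec := hGrec (n - 1) (by omega)
        rw [show n - 1 + 1 = n by omega] at hrec
        have hcast : Gr n = ∑ i ∈ Finset.Icc 1 L, (c i : ℝ) * Gr (n - i) := by
          rw [hGrdef]
          simp only []
          rw [hrec]
          push_cast
          rfl
        have hterm : ∀ i ∈ Finset.Icc 1 L,
            (c i : ℝ) * (del * lam1 ^ (n - i)) ≤ (c i : ℝ) * Gr (n - i) := by
          intro i hi
          obtain ⟨hi1, hiL⟩ := Finset.mem_Icc.mp hi
          have hih := ih (n - i) (by omega) (by omega)
          exact mul_le_mul_of_nonneg_left hih (Nat.cast_nonneg _)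
        have hsum : ∑ i ∈ Finset.Icc 1 L, (c i : ℝ) * (del * lam1 ^ (n - i)) = del * lam1 ^ n := by
          have hsplit : ∀ i ∈ Finset.Icc 1 L, (c i : ℝ) * (del * lam1 ^ (n - i))
              = del * lam1 ^ (n - L) * ((c i : ℝ) * lam1 ^ (L - i)) := by
            intro i hi
            obtain ⟨hi1, hiL⟩ := Finset.mem_Icc.mp hi
            have hp : lam1 ^ (n - i) = lam1 ^ (n - L) * lam1 ^ (L - i) := by
              rw [← pow_add]; congr 1; omega
            rw [hp]; ring
          rw [Finset.sum_congr rfl hsplit, ← Finset.mul_sum, ← hrooteq]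
          have hpp : lam1 ^ (n - L) * lam1 ^ L = lam1 ^ n := by
            rw [← pow_add]; congr 1; omega
          rw [mul_assoc, hpp]
        calc del * lam1 ^ n = ∑ i ∈ Finset.Icc 1 L, (c i : ℝ) * (del * lam1 ^ (n - i)) := hsum.symm
          _ ≤ ∑ i ∈ Finset.Icc 1 L, (c i : ℝ) * Gr (n - i) := Finset.sum_le_sum hterm
          _ = Gr n := hcast.symm
  -- max modulus of the roots of Qc, pushed below lam1
  classical
  set rootsAbs : Finset ℝ := insert (lam1 / 2) (Qc.roots.toFinset.image (‖·‖)) with hra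
  have hrane : rootsAbs.Nonempty := ⟨lam1 / 2, by rw [hra]; exact Finset.mem_insert_self _ _⟩
  set r0 : ℝ := rootsAbs.max' hrane with hr0def
  have hr0pos : 0 < r0 := by
    have h1 : lam1 / 2 ≤ r0 :=
      Finset.le_max' _ _ (by rw [hra]; exact Finset.mem_insert_self _ _)
    linarith
  have hr0lt : r0 < lam1 := by
    rw [hr0def]
    rw [Finset.max'_lt_iff]
    intro b hb
    rw [hra] at hb
    rcases Finset.mem_insert.mp hb with h | h
    · rw [h]; linarith
    · obtain ⟨z, hz, rfl⟩ := Finset.mem_image.mp h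
      rw [Multiset.mem_toFinset] at hz
      have hzr : Qc.IsRoot z := Polynomial.isRoot_of_mem_roots hz
      obtain ⟨hz1, hz2⟩ := hQcroot z hzr
      exact hdom z hz1 hz2
  have hr0b : ∀ z : ℂ, Qc.IsRoot z → ‖z‖ ≤ r0 := by
    intro z hz
    apply Finset.le_max'
    rw [hra]
    apply Finset.mem_insert_of_mem
    apply Finset.mem_image_of_mem
    rw [Multiset.mem_toFinset, Polynomial.mem_roots hQcmon.ne_zero]
    exact hz
  obtain ⟨K0, hK00, hK0z, hK0b⟩ := jordan (L - 1) Qc hQcmon hQcdeg r0 hr0pos hr0b Ec hEc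
  have hEbound : ∀ n, 1 ≤ n → |E n| ≤ K0 * (n : ℝ) ^ (L - 1 - 1) * r0 ^ n := by
    intro n hn
    have hb := hK0b n hn
    simp only [hEcdef] at hb
    rwa [Complex.norm_real, Real.norm_eq_abs] at hb
  have hAtend : Filter.Tendsto (fun n : ℕ => Gr n / lam1 ^ n) Filter.atTop (nhds A) := by
    have hdiff : Filter.Tendsto (fun n : ℕ => Gr n / lam1 ^ n - A) Filter.atTop (nhds 0) := by
      apply squeeze_zero_norm' (a := fun n : ℕ => K0 * ((n : ℝ) ^ (L - 1 - 1) * (r0 / lam1) ^ n))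
      · filter_upwards [Filter.eventually_ge_atTop 1] with n hn
        have hb := hEbound n hn
        have hlp := pow_pos hl1pos n
        rw [Real.norm_eq_abs]
        have he : Gr n / lam1 ^ n - A = E n / lam1 ^ n := by
          rw [hEdef]
          field_simp
        rw [he, abs_div, abs_of_pos hlp, div_pow, div_le_iff₀ hlp]
        calc |E n| ≤ K0 * (n : ℝ) ^ (L - 1 - 1) * r0 ^ n := hb
          _ = K0 * ((n : ℝ) ^ (L - 1 - 1) * (r0 ^ n / lam1 ^ n)) * lam1 ^ n := by
              field_simp
      · have h1 : r0 / lam1 < 1 := by rw [div_lt_one hl1pos]; exact hr0lt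
        have h0 : (0:ℝ) ≤ r0 / lam1 := by positivity
        have h2 := tendsto_pow_const_mul_const_pow_of_lt_one (L - 1 - 1) h0 h1
        have h3 := h2.const_mul K0
        simpa using h3
    have h4 := hdiff.add (tendsto_const_nhds : Filter.Tendsto (fun _ : ℕ => A) Filter.atTop (nhds A))
    simpa using h4
  have hApos : 0 < A := by
    have hge : del ≤ A := by
      apply ge_of_tendsto hAtend
      filter_upwards [Filter.eventually_ge_atTop 1] with n hn
      rw [le_div_iff₀ (pow_pos hl1pos n)]
      exact hGlow n hn
    linarith
  refine ⟨lam1, hl1pos, ?_, ?_, hdom, A, hApos, ?_⟩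
  · rw [hcharR lam1, hroot, Complex.ofReal_zero]
  · intro x hx hfx
    apply huniq x hx
    rw [hcharR x] at hfx
    exact_mod_cast hfx
  · intro lam2 hl2 hne2 hmax
    have hl2pos : 0 < ‖lam2‖ := norm_pos_iff.mpr (hchar0 lam2 hl2)
    have hroots2 : ∀ z, Qc.IsRoot z → ‖z‖ ≤ ‖lam2‖ := by
      intro z hz
      obtain ⟨h1, h2⟩ := hQcroot z hz
      exact hmax z h1 h2
    obtain ⟨K, hKnn, hKz, hKb⟩ := jordan (L - 1) Qc hQcmon hQcdeg _ hl2pos hroots2 Ec hEc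
    rw [Asymptotics.isBigO_iff]
    refine ⟨K, ?_⟩
    filter_upwards [Filter.eventually_ge_atTop 1] with n hn
    have hb := hKb n hn
    simp only [hEcdef] at hb
    rw [Complex.norm_real, Real.norm_eq_abs] at hb
    have hexp : L - 1 - 1 = L - 2 := by omega
    rw [Real.norm_eq_abs, Real.norm_eq_abs]
    have hGE : (G n : ℝ) - A * lam1 ^ n = E n := rfl
    rw [hGE, hexp] at *
    calc |E n| ≤ K * (n : ℝ) ^ (L - 2) * ‖lam2‖ ^ n := hb
      _ = K * |(n : ℝ) ^ (L - 2) * ‖lam2‖ ^ n| := by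
          rw [abs_of_nonneg (by positivity)]
          ring
end

section
/- Let {G_n} be a positive linear recurrence sequence and let H_n be the number of super-legal decompositions using only G_1, ..., G_n. Let λ_1 be the unique positive root of the characteristic polynomial of the recurrence and λ_2 a root of second-largest absolute value. Then there exists a constant B > 0 such that H_n = B λ_1^n + O(n^{L-2} |λ_2|^n). -/
open Finset Filter Asymptotics

open scoped Classical

open Polynomial

namespace SLAux

variable (L : ℕ) (c : ℕ → ℕ)

/-- The forced prefix `c 1, ..., c (s-1)`. -/
def pre (s : ℕ) : List ℕ := (List.range' 1 (s - 1)).map c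

def J : ℕ → ℕ
  | 0 => 1
  | (n+1) => ∑ s ∈ (Finset.Icc 1 (min L (n+1))).attach, c s.1 * J (n + 1 - s.1)
  decreasing_by
    have := s.2
    simp only [Finset.mem_Icc] at this
    omega

def TF : ℕ → Finset (List ℕ)
  | 0 => {([] : List ℕ)}
  | (n+1) => Finset.biUnion
      (((Finset.Icc 1 (min L (n+1))).sigma fun s => Finset.range (c s)).attach)
      (fun p => (TF (n + 1 - p.1.1)).image (fun t => pre c p.1.1 ++ p.1.2 :: t))
  decreasing_by
    have := p.2
    simp only [Finset.mem_sigma, Finset.mem_Icc] at this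
    omega

end SLAux

namespace SLAux

lemma J_succ (L : ℕ) (c : ℕ → ℕ) (n : ℕ) :
    J L c (n+1) = ∑ s ∈ Finset.Icc 1 (min L (n+1)), c s * J L c (n + 1 - s) := by
  rw [J]
  exact Finset.sum_attach (Finset.Icc 1 (min L (n+1))) (fun s => c s * J L c (n + 1 - s))

lemma J_pos (L : ℕ) (c : ℕ → ℕ) (hL : 1 ≤ L) (hc1 : 1 ≤ c 1) : ∀ n, 1 ≤ J L c n := by
  intro n
  induction n using Nat.strong_induction_on with
  | _ n ih =>
    match n with
    | 0 => simp [J]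
    | (m+1) =>
      rw [J_succ]
      have h1 : 1 ∈ Finset.Icc 1 (min L (m+1)) := by simp [Finset.mem_Icc]; omega
      have hJ : 1 ≤ J L c (m + 1 - 1) := by simpa using ih m (by omega)
      calc 1 ≤ c 1 * J L c (m + 1 - 1) := Nat.one_le_iff_ne_zero.mpr
              (Nat.mul_ne_zero (by omega) (by omega))
        _ ≤ _ := Finset.single_le_sum (f := fun s => c s * J L c (m+1-s)) (fun i _ => Nat.zero_le _) h1

lemma pre_length (c : ℕ → ℕ) (s : ℕ) : (pre c s).length = s - 1 := by
  simp [pre]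

/-- key uniqueness of the leading block -/
lemma key (c : ℕ → ℕ) {s1 s2 b1 b2 : ℕ} {t1 t2 : List ℕ}
    (hs1 : 1 ≤ s1) (hs2 : 1 ≤ s2) (hb1 : b1 < c s1) (hb2 : b2 < c s2)
    (h : pre c s1 ++ b1 :: t1 = pre c s2 ++ b2 :: t2) :
    s1 = s2 ∧ b1 = b2 ∧ t1 = t2 := by
  have main : ∀ (s1 s2 b1 b2 : ℕ) (t1 t2 : List ℕ), 1 ≤ s1 → 1 ≤ s2 → s1 ≤ s2 →
      b1 < c s1 → b2 < c s2 →
      pre c s1 ++ b1 :: t1 = pre c s2 ++ b2 :: t2 → s1 = s2 := by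
    intro s1 s2 b1 b2 t1 t2 h1 h2 hle hb1 hb2 heq
    by_contra hne
    have hlt : s1 < s2 := lt_of_le_of_ne hle hne
    have hsplit : pre c s2 = pre c s1 ++ (List.range' s1 (s2 - s1)).map c := by
      unfold pre
      rw [← List.map_append]
      congr 1
      have := List.range'_append (s := 1) (m := s1 - 1) (n := s2 - s1) (step := 1)
      simp only [one_mul] at this
      rw [show 1 + (s1 - 1) = s1 by omega] at this
      rw [show s2 - 1 = (s1 - 1) + (s2 - s1) by omega]
      exact this.symm
    rw [hsplit, List.append_assoc] at heq
    have heq2 : b1 :: t1 = (List.range' s1 (s2 - s1)).map c ++ b2 :: t2 :=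
      List.append_cancel_left heq
    have hr : List.range' s1 (s2 - s1) = s1 :: List.range' (s1 + 1) (s2 - s1 - 1) := by
      rw [show s2 - s1 = (s2 - s1 - 1) + 1 by omega]
      exact List.range'_succ (s := s1) (n := s2 - s1 - 1) (step := 1)
    rw [hr] at heq2
    simp only [List.map_cons, List.cons_append, List.cons.injEq] at heq2
    omega
  rcases Nat.le_total s1 s2 with hle | hle
  · have hs : s1 = s2 := main s1 s2 b1 b2 t1 t2 hs1 hs2 hle hb1 hb2 h
    subst hs
    have := List.append_cancel_left h
    simp only [List.cons.injEq] at this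
    exact ⟨rfl, this.1, this.2⟩
  · have hs : s2 = s1 := main s2 s1 b2 b1 t2 t1 hs2 hs1 hle hb2 hb1 h.symm
    subst hs
    have := List.append_cancel_left h
    simp only [List.cons.injEq] at this
    exact ⟨rfl, this.1, this.2⟩

end SLAux

namespace SLAux

lemma SL_ne_nil {L : ℕ} {c : ℕ → ℕ} {q : List ℕ} (h : IsSuperLegal L c q) : q ≠ [] := by
  cases h <;> simp

lemma zcons {L : ℕ} {c : ℕ → ℕ} (hL : 1 ≤ L) (hc1 : 1 ≤ c 1) {q : List ℕ}
    (hq : IsSuperLegal L c q) (z : ℕ) :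
    IsSuperLegal L c (List.replicate z 0 ++ q) := by
  cases z with
  | zero => simpa using hq
  | succ k =>
    have := IsSuperLegal.consBlock (L := L) (c := c) 1 le_rfl hL 0 hc1 k q hq
    simpa [List.replicate_succ] using this

lemma TF_mem_iff (L : ℕ) (c : ℕ → ℕ) (hL : 1 ≤ L) (hc1 : 1 ≤ c 1) :
    ∀ n, 1 ≤ n → ∀ q : List ℕ, q ∈ TF L c n ↔ (q.length = n ∧ IsSuperLegal L c q) := by
  have zero_mem : ∀ m, List.replicate m 0 ∈ TF L c m := by
    intro m
    induction m with
    | zero => simp [TF]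
    | succ k ih =>
      rw [TF]
      rw [Finset.mem_biUnion]
      have hp : (⟨1, 0⟩ : Σ _ : ℕ, ℕ) ∈ (Finset.Icc 1 (min L (k+1))).sigma fun s => Finset.range (c s) := by
        simp [Finset.mem_sigma, Finset.mem_Icc]
        omega
      refine ⟨⟨⟨1, 0⟩, hp⟩, Finset.mem_attach _ _, ?_⟩
      rw [Finset.mem_image]
      exact ⟨List.replicate k 0, by simpa using ih, by simp [pre, List.replicate_succ]⟩
  intro n
  induction n using Nat.strong_induction_on with
  | _ n ih =>
  intro hn q
  obtain ⟨m, rfl⟩ : ∃ m, n = m + 1 := ⟨n - 1, by omega⟩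
  rw [TF, Finset.mem_biUnion]
  constructor
  · rintro ⟨⟨⟨s, b⟩, hp⟩, -, hq⟩
    rw [Finset.mem_image] at hq
    obtain ⟨t, ht, rfl⟩ := hq
    simp only [Finset.mem_sigma, Finset.mem_Icc, Finset.mem_range] at hp
    obtain ⟨⟨hs1, hs2⟩, hb⟩ := hp
    have hsL : s ≤ L := le_trans hs2 (min_le_left _ _)
    have hsn : s ≤ m + 1 := le_trans hs2 (min_le_right _ _)
    by_cases hz : m + 1 - s = 0
    · -- t = []
      rw [hz] at ht
      simp only [TF, Finset.mem_singleton] at ht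
      subst ht
      constructor
      · simp [pre_length]; omega
      · have := IsSuperLegal.lastBlock (L := L) (c := c) s hs1 hsL b hb 0
        simpa [pre] using this
    · have ht' := (ih (m + 1 - s) (by omega) (by omega) t).mp ht
      constructor
      · simp [pre_length, ht'.1]; omega
      · have := IsSuperLegal.consBlock (L := L) (c := c) s hs1 hsL b hb 0 t ht'.2
        simpa [pre] using this
  · rintro ⟨hlen, hsl⟩
    cases hsl with
    | lastBlock s h1 h2 b hb z =>
      have hlen' : (s - 1) + (z + 1) = m + 1 := by
        simpa [pre_length, List.length_append, List.length_replicate] using hlen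
      have hp : (⟨s, b⟩ : Σ _ : ℕ, ℕ) ∈ (Finset.Icc 1 (min L (m+1))).sigma fun s => Finset.range (c s) := by
        simp [Finset.mem_sigma, Finset.mem_Icc]
        exact ⟨⟨h1, h2, by omega⟩, hb⟩
      refine ⟨⟨⟨s, b⟩, hp⟩, Finset.mem_attach _ _, ?_⟩
      rw [Finset.mem_image]
      refine ⟨List.replicate z 0, ?_, rfl⟩
      have : m + 1 - s = z := by omega
      rw [this]
      exact zero_mem z
    | consBlock s h1 h2 b hb z rest hrest =>
      have hrl : rest.length ≥ 1 := by
        have := SL_ne_nil hrest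
        cases rest with
        | nil => exact absurd rfl this
        | cons a l => simp
      have hlen' : (s - 1) + (z + rest.length + 1) = m + 1 := by
        simpa [pre_length, List.length_append, List.length_replicate] using hlen
      have hp : (⟨s, b⟩ : Σ _ : ℕ, ℕ) ∈ (Finset.Icc 1 (min L (m+1))).sigma fun s => Finset.range (c s) := by
        simp [Finset.mem_sigma, Finset.mem_Icc]
        exact ⟨⟨h1, h2, by omega⟩, hb⟩
      refine ⟨⟨⟨s, b⟩, hp⟩, Finset.mem_attach _ _, ?_⟩
      rw [Finset.mem_image]
      refine ⟨List.replicate z 0 ++ rest, ?_, rfl⟩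
      have hm : m + 1 - s = z + rest.length := by omega
      rw [hm]
      have hsl' : IsSuperLegal L c (List.replicate z 0 ++ rest) := zcons hL hc1 hrest z
      exact ((ih (z + rest.length) (by omega) (by omega) _).mpr
        ⟨by simp, hsl'⟩)

end SLAux

namespace SLAux

lemma TF_card (L : ℕ) (c : ℕ → ℕ) : ∀ n, (TF L c n).card = J L c n := by
  intro n
  induction n using Nat.strong_induction_on with
  | _ n ih =>
  match n with
  | 0 => simp [TF, J]
  | (m+1) =>
    rw [TF, J]
    rw [Finset.card_biUnion]
    · rw [Finset.sum_attach (((Finset.Icc 1 (min L (m+1))).sigma fun s => Finset.range (c s)))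
        (fun p => ((TF L c (m + 1 - p.1)).image (fun t => pre c p.1 ++ p.2 :: t)).card)]
      rw [Finset.sum_sigma]
      rw [Finset.sum_attach (Finset.Icc 1 (min L (m+1))) (fun s => c s * J L c (m + 1 - s))]
      refine Finset.sum_congr rfl ?_
      intro s hs
      have hcard : ∀ b : ℕ, ((TF L c (m + 1 - s)).image (fun t => pre c s ++ b :: t)).card
          = J L c (m + 1 - s) := by
        intro b
        rw [Finset.card_image_of_injective]
        · exact ih (m + 1 - s) (by simp only [Finset.mem_Icc] at hs; omega)
        · intro t1 t2 h
          have := List.append_cancel_left h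
          simpa using this
      show ∑ b ∈ Finset.range (c s),
          ((TF L c (m + 1 - s)).image (fun t => pre c s ++ b :: t)).card
          = c s * J L c (m + 1 - s)
      simp only [hcard]
      rw [Finset.sum_const, Finset.card_range, smul_eq_mul]
    · intro p1 h1 p2 h2 hne
      obtain ⟨⟨s1, b1⟩, hm1⟩ := p1
      obtain ⟨⟨s2, b2⟩, hm2⟩ := p2
      simp only [Finset.mem_sigma, Finset.mem_Icc, Finset.mem_range] at hm1 hm2
      apply Finset.disjoint_left.mpr
      intro q hq1 hq2
      rw [Finset.mem_image] at hq1 hq2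
      obtain ⟨t1, ht1, hq1⟩ := hq1
      obtain ⟨t2, ht2, hq2⟩ := hq2
      have heq : pre c s1 ++ b1 :: t1 = pre c s2 ++ b2 :: t2 := by
        rw [hq1, hq2]
      obtain ⟨hs, hb, ht⟩ := key c hm1.1.1 hm2.1.1 hm1.2 hm2.2 heq
      subst hs; subst hb
      exact hne rfl

end SLAux

namespace SLAux

lemma numSuperLegal_eq_J (L : ℕ) (c : ℕ → ℕ) (hL : 1 ≤ L) (hc1 : 1 ≤ c 1)
    (n : ℕ) (hn : 1 ≤ n) : numSuperLegal L c n = J L c n := by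
  unfold numSuperLegal
  have e : {q : List ℕ // q.length = n ∧ IsSuperLegal L c q} ≃ {q : List ℕ // q ∈ TF L c n} :=
    Equiv.subtypeEquivRight (fun q => (TF_mem_iff L c hL hc1 n hn q).symm)
  rw [Nat.card_congr e, Nat.card_eq_finsetCard, TF_card]

end SLAux

namespace SLAux

noncomputable def Sh : (ℕ → ℂ) →ₗ[ℂ] (ℕ → ℂ) where
  toFun u := fun n => u (n + 1)
  map_add' := by intros; rfl
  map_smul' := by intros; rfl

lemma Sh_pow_apply : ∀ (k : ℕ) (u : ℕ → ℂ) (n : ℕ), ((Sh ^ k) u) n = u (n + k) := by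
  intro k
  induction k with
  | zero => intro u n; simp
  | succ k ih =>
    intro u n
    rw [pow_succ, Module.End.mul_apply, ih]
    rfl

lemma aeval_X_sub_C_apply (μ : ℂ) (u : ℕ → ℂ) :
    (Polynomial.aeval Sh (X - C μ)) u = fun n => u (n + 1) - μ * u n := by
  rw [map_sub, aeval_X, aeval_C]
  funext n
  simp [Sh, Module.algebraMap_end_apply]

lemma REC (r : ℝ) (hr : 0 < r) :
    ∀ (l : List ℂ), (∀ μ ∈ l, ‖μ‖ ≤ r) →
    ∀ u : ℕ → ℂ,
      (Polynomial.aeval Sh) ((l.map (fun μ => X - C μ)).prod) u = 0 →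
    ∃ Cb : ℝ, 0 ≤ Cb ∧ ∀ n, 1 ≤ n →
      ‖u n‖ ≤ Cb * (n : ℝ) ^ (l.length - 1) * r ^ n := by
  intro l
  induction l with
  | nil =>
    intro _ u hu
    simp only [List.map_nil, List.prod_nil, map_one, Module.End.one_apply] at hu
    refine ⟨0, le_rfl, fun n hn => ?_⟩
    rw [hu]
    simp
  | cons μ l ih =>
    intro hl u hu
    set v : ℕ → ℂ := fun n => u (n + 1) - μ * u n with hvdef
    have hμr : ‖μ‖ ≤ r := hl μ (List.mem_cons_self)
    have hv0 : (Polynomial.aeval Sh) ((l.map (fun μ => X - C μ)).prod) v = 0 := by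
      have h1 : ((μ :: l).map (fun μ => X - C μ)).prod
          = (l.map (fun μ => X - C μ)).prod * (X - C μ) := by
        rw [List.map_cons, List.prod_cons, mul_comm]
      rw [h1, map_mul, Module.End.mul_apply, aeval_X_sub_C_apply] at hu
      exact hu
    -- closed form for u
    have hstep : ∀ n, u (n + 1) = μ * u n + v n := by
      intro n; simp only [hvdef]; ring
    have hufold : ∀ n, u n = μ ^ n * u 0 + ∑ j ∈ Finset.range n, μ ^ (n - 1 - j) * v j := by
      intro n
      induction n with
      | zero => simp
      | succ n ihn =>
        rw [hstep n, ihn, Finset.sum_range_succ, mul_add, Finset.mul_sum]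
        have e1 : ∀ j ∈ Finset.range n,
            μ * (μ ^ (n - 1 - j) * v j) = μ ^ (n + 1 - 1 - j) * v j := by
          intro j hj
          rw [Finset.mem_range] at hj
          rw [← mul_assoc, (pow_succ' μ (n - 1 - j)).symm]
          congr 2
          omega
        rw [Finset.sum_congr rfl e1]
        have e2 : μ ^ (n + 1 - 1 - n) = 1 := by simp
        rw [e2, ← mul_assoc, ← pow_succ']
        ring
    have habs : ∀ n, ‖u n‖ ≤
        r ^ n * ‖u 0‖ + ∑ j ∈ Finset.range n, r ^ (n - 1 - j) * ‖v j‖ := by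
      intro n
      rw [hufold n]
      refine le_trans (norm_add_le _ _) (add_le_add ?_ ?_)
      · rw [norm_mul, norm_pow]
        exact mul_le_mul_of_nonneg_right (pow_le_pow_left₀ (norm_nonneg μ) hμr n)
          (norm_nonneg _)
      · refine le_trans (norm_sum_le _ _) (Finset.sum_le_sum ?_)
        intro j hj
        rw [norm_mul, norm_pow]
        exact mul_le_mul_of_nonneg_right (pow_le_pow_left₀ (norm_nonneg μ) hμr _)
          (norm_nonneg _)
    obtain ⟨C, hC0, hC⟩ := ih (fun ν hν => hl ν (List.mem_cons_of_mem _ hν)) v hv0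
    match l with
    | [] =>
      -- v = 0, u n = μ ^ n * u 0
      have hvz : v = 0 := by
        simpa using hv0
      refine ⟨‖u 0‖, norm_nonneg _, fun n hn => ?_⟩
      have h1 : ‖u n‖ ≤ r ^ n * ‖u 0‖ := by
        refine le_trans (habs n) ?_
        simp [hvz]
      refine le_trans h1 ?_
      simp only [List.length_cons, List.length_nil, Nat.zero_add, Nat.sub_self, pow_zero]
      rw [mul_one]
      rw [mul_comm]
    | (ν :: l') =>
      set d : ℕ := (ν :: l').length with hd
      have hd1 : 1 ≤ d := by simp [hd]
      refine ⟨‖u 0‖ + ‖v 0‖ / r + C / r, by positivity, fun n hn => ?_⟩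
      have hrn : r ^ (n - 1) * r = r ^ n := by
        rw [← pow_succ]
        congr 1
        omega
      have hsum : ∑ j ∈ Finset.range n, r ^ (n - 1 - j) * ‖v j‖
          ≤ r ^ (n - 1) * ‖v 0‖ + C * (n : ℝ) ^ d * r ^ (n - 1) := by
        obtain ⟨m, rfl⟩ : ∃ m, n = m + 1 := ⟨n - 1, by omega⟩
        rw [Finset.sum_range_succ']
        simp only [Nat.add_sub_cancel]
        rw [add_comm]
        refine add_le_add ?_ ?_
        · rw [Nat.sub_zero]
        · have hterm : ∀ j ∈ Finset.range m,
              r ^ (m - (j + 1)) * ‖v (j + 1)‖ ≤ C * ((m + 1 : ℕ) : ℝ) ^ (d - 1) * r ^ m := by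
            intro j hj
            rw [Finset.mem_range] at hj
            have hvb := hC (j + 1) (by omega)
            have h2 : r ^ (m - (j + 1)) * ‖v (j + 1)‖
                ≤ r ^ (m - (j + 1)) * (C * ((j + 1 : ℕ) : ℝ) ^ (d - 1) * r ^ (j + 1)) :=
              mul_le_mul_of_nonneg_left hvb (pow_nonneg hr.le _)
            refine le_trans h2 ?_
            have h3 : r ^ (m - (j + 1)) * r ^ (j + 1) = r ^ m := by
              rw [← pow_add]
              congr 1
              omega
            have h4 : ((j + 1 : ℕ) : ℝ) ^ (d - 1) ≤ ((m + 1 : ℕ) : ℝ) ^ (d - 1) := by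
              refine pow_le_pow_left₀ (by positivity) ?_ _
              exact_mod_cast Nat.succ_le_succ hj.le
            calc r ^ (m - (j + 1)) * (C * ((j + 1 : ℕ) : ℝ) ^ (d - 1) * r ^ (j + 1))
                = C * ((j + 1 : ℕ) : ℝ) ^ (d - 1) * (r ^ (m - (j + 1)) * r ^ (j + 1)) := by ring
              _ = C * ((j + 1 : ℕ) : ℝ) ^ (d - 1) * r ^ m := by rw [h3]
              _ ≤ C * ((m + 1 : ℕ) : ℝ) ^ (d - 1) * r ^ m := by
                  refine mul_le_mul_of_nonneg_right (mul_le_mul_of_nonneg_left h4 hC0)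
                    (pow_nonneg hr.le _)
          refine le_trans (Finset.sum_le_sum hterm) ?_
          have h5 : (m : ℝ) * (C * ((m + 1 : ℕ) : ℝ) ^ (d - 1)) ≤ C * ((m + 1 : ℕ) : ℝ) ^ d := by
            have h6 : (m : ℝ) * ((m + 1 : ℕ) : ℝ) ^ (d - 1) ≤ ((m + 1 : ℕ) : ℝ) ^ d := by
              calc (m : ℝ) * ((m + 1 : ℕ) : ℝ) ^ (d - 1)
                  ≤ ((m + 1 : ℕ) : ℝ) * ((m + 1 : ℕ) : ℝ) ^ (d - 1) := by
                    refine mul_le_mul_of_nonneg_right ?_ (by positivity)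
                    exact_mod_cast Nat.le_succ m
                _ = ((m + 1 : ℕ) : ℝ) ^ (d - 1 + 1) := (pow_succ' _ _).symm
                _ = ((m + 1 : ℕ) : ℝ) ^ d := by congr 1 <;> omega
            calc (m : ℝ) * (C * ((m + 1 : ℕ) : ℝ) ^ (d - 1))
                = C * ((m : ℝ) * ((m + 1 : ℕ) : ℝ) ^ (d - 1)) := by ring
              _ ≤ C * ((m + 1 : ℕ) : ℝ) ^ d := mul_le_mul_of_nonneg_left h6 hC0
          calc ∑ _j ∈ Finset.range m, C * ((m + 1 : ℕ) : ℝ) ^ (d - 1) * r ^ m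
              = (m : ℝ) * (C * ((m + 1 : ℕ) : ℝ) ^ (d - 1)) * r ^ m := by
                rw [Finset.sum_const, Finset.card_range, nsmul_eq_mul]; ring
            _ ≤ C * ((m + 1 : ℕ) : ℝ) ^ d * r ^ m :=
                mul_le_mul_of_nonneg_right h5 (pow_nonneg hr.le _)
      -- combine
      have hnd1 : (1 : ℝ) ≤ (n : ℝ) ^ d := one_le_pow₀ (by exact_mod_cast hn)
      have hln : (μ :: ν :: l').length - 1 = d := by simp [hd]
      rw [hln]
      calc ‖u n‖
          ≤ r ^ n * ‖u 0‖ +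
            (r ^ (n - 1) * ‖v 0‖ + C * (n : ℝ) ^ d * r ^ (n - 1)) :=
            le_trans (habs n) (add_le_add le_rfl hsum)
        _ = (‖u 0‖ + ‖v 0‖ / r + C * (n : ℝ) ^ d / r) * r ^ n := by
            field_simp
            rw [← hrn]
            ring
        _ ≤ (‖u 0‖ + ‖v 0‖ / r + C / r) * (n : ℝ) ^ d * r ^ n := by
            refine mul_le_mul_of_nonneg_right ?_ (pow_nonneg hr.le _)
            rw [add_mul, add_mul]
            refine add_le_add (add_le_add ?_ ?_) ?_
            · exact le_mul_of_one_le_right (norm_nonneg _) hnd1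
            · exact le_mul_of_one_le_right (by positivity) hnd1
            · exact le_of_eq (div_mul_eq_mul_div _ _ _).symm

end SLAux

namespace SLAux

noncomputable def charFun' (L : ℕ) (c : ℕ → ℕ) (z : ℂ) : ℂ :=
  z ^ L - ∑ i ∈ Finset.Icc 1 L, (c i : ℂ) * z ^ (L - i)

noncomputable def Pp (L : ℕ) (c : ℕ → ℕ) : Polynomial ℂ :=
  X ^ L - ∑ i ∈ Finset.Icc 1 L, C ((c i : ℂ)) * X ^ (L - i)

lemma Pp_eval (L : ℕ) (c : ℕ → ℕ) (z : ℂ) : (Pp L c).eval z = charFun' L c z := by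
  simp [Pp, charFun', eval_finset_sum]

lemma deg_sum_lt (L : ℕ) (c : ℕ → ℕ) (hL : 1 ≤ L) :
    (∑ i ∈ Finset.Icc 1 L, C ((c i : ℂ)) * X ^ (L - i)).degree < (L : WithBot ℕ) := by
  refine lt_of_le_of_lt (Polynomial.degree_sum_le _ _) ?_
  rw [Finset.sup_lt_iff (by exact WithBot.bot_lt_coe L)]
  intro i hi
  simp only [Finset.mem_Icc] at hi
  refine lt_of_le_of_lt (degree_C_mul_X_pow_le _ _) ?_
  exact_mod_cast Nat.sub_lt (by omega) (by omega)

lemma Pp_monic (L : ℕ) (c : ℕ → ℕ) (hL : 1 ≤ L) : (Pp L c).Monic :=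
  monic_X_pow_sub (deg_sum_lt L c hL)

lemma Pp_natDegree (L : ℕ) (c : ℕ → ℕ) (hL : 1 ≤ L) : (Pp L c).natDegree = L := by
  have h : (Pp L c).degree = L := by
    rw [Pp, degree_sub_eq_left_of_degree_lt]
    · exact degree_X_pow L
    · rw [degree_X_pow]; exact deg_sum_lt L c hL
  exact natDegree_eq_of_degree_eq_some h

end SLAux

namespace SLAux

lemma aeval_Pp_apply (L : ℕ) (c : ℕ → ℕ) (u : ℕ → ℂ) (n : ℕ) :
    ((Polynomial.aeval Sh) (Pp L c)) u n
      = u (n + L) - ∑ i ∈ Finset.Icc 1 L, (c i : ℂ) * u (n + (L - i)) := by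
  rw [Pp, map_sub, map_pow, aeval_X, map_sum]
  rw [LinearMap.sub_apply]
  rw [Pi.sub_apply]
  rw [Sh_pow_apply]
  congr 1
  rw [LinearMap.coe_sum, Finset.sum_apply, Finset.sum_apply]
  refine Finset.sum_congr rfl ?_
  intro i hi
  rw [map_mul, aeval_C, map_pow, aeval_X, Module.End.mul_apply, Module.algebraMap_end_apply,
    Pi.smul_apply, Sh_pow_apply, smul_eq_mul]

end SLAux

namespace SLAux

lemma deriv_ne_zero (L : ℕ) (c : ℕ → ℕ) (hL : 1 ≤ L) (hc1 : 1 ≤ c 1)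
    (lam1 : ℝ) (hlam1 : 0 < lam1) (hroot : charFun' L c lam1 = 0) :
    (Polynomial.derivative (Pp L c)).eval (lam1 : ℂ) ≠ 0 := by
  set x : ℂ := (lam1 : ℂ) with hxdef
  have hx0 : x ≠ 0 := by
    simp [hxdef, Complex.ofReal_ne_zero]
    exact ne_of_gt hlam1
  have hx : x ^ L = ∑ i ∈ Finset.Icc 1 L, (c i : ℂ) * x ^ (L - i) := by
    have := hroot
    rw [charFun', sub_eq_zero] at this
    exact this
  have hd : Polynomial.derivative (Pp L c)
      = C ((L : ℂ)) * X ^ (L - 1)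
        - ∑ i ∈ Finset.Icc 1 L, C ((c i : ℂ)) * (C (((L - i : ℕ) : ℂ)) * X ^ (L - i - 1)) := by
    rw [Pp, map_sub, derivative_X_pow, map_sum]
    congr 1
    refine Finset.sum_congr rfl fun i hi => ?_
    rw [derivative_C_mul, derivative_X_pow]
  have hE : (Polynomial.derivative (Pp L c)).eval x
      = (L : ℂ) * x ^ (L - 1)
        - ∑ i ∈ Finset.Icc 1 L, (c i : ℂ) * (((L - i : ℕ) : ℂ) * x ^ (L - i - 1)) := by
    rw [hd]
    simp [eval_finset_sum]
  have hkey : x * (Polynomial.derivative (Pp L c)).eval x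
      = ∑ i ∈ Finset.Icc 1 L, (i : ℂ) * (c i : ℂ) * x ^ (L - i) := by
    rw [hE, mul_sub]
    have h1 : x * ((L : ℂ) * x ^ (L - 1)) = (L : ℂ) * x ^ L := by
      rw [mul_comm x, mul_assoc, ← pow_succ]
      congr 2
      omega
    rw [h1, hx, Finset.mul_sum, Finset.mul_sum, ← Finset.sum_sub_distrib]
    refine Finset.sum_congr rfl fun i hi => ?_
    simp only [Finset.mem_Icc] at hi
    by_cases hiL : i = L
    · subst hiL
      simp
    · have hiL' : i < L := lt_of_le_of_ne hi.2 hiL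
      have h2 : x * ((c i : ℂ) * (((L - i : ℕ) : ℂ) * x ^ (L - i - 1)))
          = (c i : ℂ) * (((L - i : ℕ) : ℂ) * x ^ (L - i)) := by
        rw [show x * ((c i : ℂ) * (((L - i : ℕ) : ℂ) * x ^ (L - i - 1)))
            = (c i : ℂ) * (((L - i : ℕ) : ℂ) * (x * x ^ (L - i - 1))) by ring]
        rw [← pow_succ']
        congr 3
        omega
      rw [h2]
      have h3 : ((L - i : ℕ) : ℂ) = (L : ℂ) - (i : ℂ) := by
        push_cast [Nat.cast_sub hi.2]
        ring
      rw [h3]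
      ring
  have hpos : x * (Polynomial.derivative (Pp L c)).eval x ≠ 0 := by
    rw [hkey]
    have hcast : ∑ i ∈ Finset.Icc 1 L, (i : ℂ) * (c i : ℂ) * x ^ (L - i)
        = ((∑ i ∈ Finset.Icc 1 L, (i : ℝ) * (c i : ℝ) * lam1 ^ (L - i) : ℝ) : ℂ) := by
      push_cast
      rfl
    rw [hcast]
    rw [Complex.ofReal_ne_zero]
    have : 0 < ∑ i ∈ Finset.Icc 1 L, (i : ℝ) * (c i : ℝ) * lam1 ^ (L - i) := by
      refine Finset.sum_pos' (fun i hi => ?_) ⟨1, by simp [Finset.mem_Icc]; omega, ?_⟩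
      · positivity
      · have h7 : (1 : ℝ) ≤ (c 1 : ℝ) := by exact_mod_cast hc1
        have h8 : (0 : ℝ) < lam1 ^ (L - 1) := by positivity
        push_cast
        nlinarith
    exact ne_of_gt this
  intro h
  rw [h, mul_zero] at hpos
  exact hpos rfl

end SLAux

namespace SLAux

set_option maxHeartbeats 1000000 in
lemma analytic (L : ℕ) (c : ℕ → ℕ) (hL2 : 2 ≤ L) (hc1 : 1 ≤ c 1) (hcL : 1 ≤ c L)
    (JR : ℕ → ℝ) (hJ1 : ∀ n, 1 ≤ JR n)
    (hrec : ∀ n, JR (n + L) = ∑ i ∈ Finset.Icc 1 L, (c i : ℝ) * JR (n + L - i))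
    (lam1 : ℝ) (hlam1 : 0 < lam1) (hroot1 : charFun' L c (lam1 : ℂ) = 0)
    (hdom : ∀ z : ℂ, charFun' L c z = 0 → z ≠ (lam1 : ℂ) → ‖z‖ < lam1)
    (lam2 : ℂ) (hroot2 : charFun' L c lam2 = 0) (hne2 : lam2 ≠ (lam1 : ℂ))
    (hsec : ∀ z : ℂ, charFun' L c z = 0 → z ≠ (lam1 : ℂ) → ‖z‖ ≤ ‖lam2‖) :
    ∃ B : ℝ, 0 < B ∧ ∃ C1 : ℝ, ∀ n : ℕ, 1 ≤ n →
      |JR n - B * lam1 ^ n| ≤ C1 * (n : ℝ) ^ (L - 2) * ‖lam2‖ ^ n := by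
  have hL : 1 ≤ L := by omega
  set r : ℝ := ‖lam2‖ with hrdef
  have hlam2ne : lam2 ≠ 0 := by
    intro h
    rw [h] at hroot2
    rw [charFun'] at hroot2
    rw [zero_pow (by omega : L ≠ 0)] at hroot2
    rw [Finset.sum_eq_single L (fun i hi hne => by
      rw [Finset.mem_Icc] at hi
      rw [zero_pow (by omega : L - i ≠ 0), mul_zero]) (by simp [Finset.mem_Icc]; omega)] at hroot2
    rw [Nat.sub_self, pow_zero, mul_one, zero_sub, neg_eq_zero] at hroot2
    have : c L = 0 := by exact_mod_cast hroot2
    omega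
  have hr0 : 0 < r := by
    rw [hrdef]
    exact norm_pos_iff.mpr hlam2ne
  have hrl : r < lam1 := hdom lam2 hroot2 hne2
  -- factor Pp = (X - C lam1) * g
  have hProot : (Pp L c).IsRoot ((lam1 : ℝ) : ℂ) := by
    rw [Polynomial.IsRoot, Pp_eval]
    exact hroot1
  obtain ⟨g, hg⟩ := Polynomial.dvd_iff_isRoot.mpr hProot
  have hPm := Pp_monic L c hL
  have hgm : g.Monic := by
    have := hg ▸ hPm
    exact (monic_X_sub_C ((lam1 : ℝ) : ℂ)).of_mul_monic_left this
  have hgd : g.natDegree = L - 1 := by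
    have h1 : (Pp L c).natDegree = L := Pp_natDegree L c hL
    rw [hg, Polynomial.Monic.natDegree_mul (monic_X_sub_C _) hgm, natDegree_X_sub_C] at h1
    omega
  have hgl1 : g.eval ((lam1 : ℝ) : ℂ) ≠ 0 := by
    have hder : (Polynomial.derivative (Pp L c)).eval ((lam1 : ℝ) : ℂ) = g.eval ((lam1 : ℝ) : ℂ) := by
      rw [hg, derivative_mul]
      simp [derivative_X_sub_C]
    rw [← hder]
    exact deriv_ne_zero L c hL hc1 lam1 hlam1 hroot1
  have hsplit : g.Splits := IsAlgClosed.splits g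
  have hgprod : g = (g.roots.map fun a => X - C a).prod :=
    hsplit.eq_prod_roots_of_monic hgm
  have hcardroots : g.roots.card = L - 1 := by
    rw [splits_iff_card_roots.mp hsplit, hgd]
  have hrootbound : ∀ μ ∈ g.roots, ‖μ‖ ≤ r := by
    intro μ hμ
    have hgne : g ≠ 0 := hgm.ne_zero
    have hμroot : g.IsRoot μ := (Polynomial.mem_roots hgne).1 hμ
    have hPμ : charFun' L c μ = 0 := by
      rw [← Pp_eval, hg, eval_mul, hμroot.eq_zero, mul_zero]
    have hμne : μ ≠ ((lam1 : ℝ) : ℂ) := fun h => hgl1 (h ▸ hμroot)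
    exact hsec μ hPμ hμne
  set lr : List ℂ := g.roots.toList with hlrdef
  have hlrlen : lr.length = L - 1 := by
    rw [hlrdef, Multiset.length_toList, hcardroots]
  have hlrprod : (lr.map (fun μ => X - C μ)).prod = g := by
    conv_rhs => rw [hgprod]
    rw [hlrdef, ← Multiset.prod_coe ((g.roots.toList).map (fun μ => X - C μ))]
    rw [← Multiset.map_coe, Multiset.coe_toList]
  have hlrbound : ∀ μ ∈ lr, ‖μ‖ ≤ r := fun μ h =>
    hrootbound μ (by rwa [hlrdef, Multiset.mem_toList] at h)
  -- the sequence
  set jC : ℕ → ℂ := fun n => ((JR n : ℝ) : ℂ) with hjCdef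
  have hPj : ((Polynomial.aeval Sh) (Pp L c)) jC = 0 := by
    funext n
    rw [aeval_Pp_apply]
    have h1 : ∑ i ∈ Finset.Icc 1 L, (c i : ℂ) * jC (n + (L - i))
        = ∑ i ∈ Finset.Icc 1 L, (c i : ℂ) * jC (n + L - i) := by
      refine Finset.sum_congr rfl fun i hi => ?_
      rw [Finset.mem_Icc] at hi
      congr 2
      omega
    rw [h1]
    have h2 := hrec n
    show jC (n + L) - _ = (0 : ℂ)
    rw [sub_eq_zero, hjCdef]
    push_cast [h2]
    rfl
  set K : ℕ → ℂ := ((Polynomial.aeval Sh) (X - C ((lam1 : ℝ) : ℂ))) jC with hKdef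
  have hKg : ((Polynomial.aeval Sh) g) K = 0 := by
    rw [hKdef, ← Module.End.mul_apply, ← map_mul, mul_comm, ← hg]
    exact hPj
  obtain ⟨C0, hC00, hC0b⟩ := REC r hr0 lr hlrbound K (by rw [hlrprod]; exact hKg)
  have hexp : lr.length - 1 = L - 2 := by omega
  rw [hexp] at hC0b
  -- real-valued difference sequence
  set KR : ℕ → ℝ := fun n => JR (n + 1) - lam1 * JR n with hKRdef
  have hKRK : ∀ n, K n = ((KR n : ℝ) : ℂ) := by
    intro n
    rw [hKdef, aeval_X_sub_C_apply, hKRdef]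
    push_cast
    rfl
  have hKR : ∀ n, 1 ≤ n → |KR n| ≤ C0 * (n : ℝ) ^ (L - 2) * r ^ n := by
    intro n hn
    have h := hC0b n hn
    rwa [hKRK n, Complex.norm_real, Real.norm_eq_abs] at h
  set q : ℝ := r / lam1 with hqdef
  have hq0 : 0 < q := div_pos hr0 hlam1
  have hq1 : q < 1 := (div_lt_one hlam1).mpr hrl
  set term : ℕ → ℝ := fun m => KR m / lam1 ^ (m + 1) with htermdef
  have hgeom : Summable (fun m : ℕ => (m : ℝ) ^ (L - 2) * q ^ m) := by
    refine summable_pow_mul_geometric_of_norm_lt_one (L - 2) ?_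
    rw [Real.norm_eq_abs, abs_of_pos hq0]
    exact hq1
  have htermb : ∀ m : ℕ, 1 ≤ m → |term m| ≤ (C0 / lam1) * ((m : ℝ) ^ (L - 2) * q ^ m) := by
    intro m hm
    rw [htermdef]
    rw [abs_div, abs_of_pos (pow_pos hlam1 (m + 1))]
    rw [div_le_iff₀ (pow_pos hlam1 (m + 1))]
    calc |KR m| ≤ C0 * (m : ℝ) ^ (L - 2) * r ^ m := hKR m hm
      _ = C0 / lam1 * ((m : ℝ) ^ (L - 2) * q ^ m) * lam1 ^ (m + 1) := by
          rw [hqdef, div_pow, pow_succ]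
          field_simp
  have hsumterm : Summable term := by
    refine Summable.of_norm_bounded_eventually_nat
      (g := fun m => (C0 / lam1) * ((m : ℝ) ^ (L - 2) * q ^ m)) (hgeom.mul_left _) ?_
    filter_upwards [Filter.eventually_ge_atTop 1] with m hm
    rw [Real.norm_eq_abs]
    exact htermb m hm
  set B : ℝ := JR 0 + ∑' m, term m with hBdef
  have hpartial : ∀ n, JR n / lam1 ^ n = JR 0 + ∑ m ∈ Finset.range n, term m := by
    intro n
    induction n with
    | zero => simp
    | succ n ihn =>
      rw [Finset.sum_range_succ, ← add_assoc, ← ihn, htermdef]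
      have h1 : JR (n + 1) = lam1 * JR n + KR n := by rw [hKRdef]; ring
      rw [h1]
      have h2 : lam1 ^ (n + 1) ≠ 0 := ne_of_gt (pow_pos hlam1 _)
      field_simp
      ring
  have htail : ∀ n, B - JR n / lam1 ^ n = ∑' m, term (m + n) := by
    intro n
    have h := Summable.sum_add_tsum_nat_add n hsumterm
    rw [hBdef, hpartial n]
    linarith [h]
  -- tail bound
  set Sq : ℝ := ∑' k : ℕ, ((k + 1 : ℕ) : ℝ) ^ (L - 2) * q ^ k with hSqdef
  have hshift : Summable (fun k : ℕ => ((k + 1 : ℕ) : ℝ) ^ (L - 2) * q ^ k) := by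
    have h1 : Summable (fun k : ℕ => (1 / q) * (((k + 1 : ℕ) : ℝ) ^ (L - 2) * q ^ (k + 1))) := by
      refine Summable.mul_left _ ?_
      exact (summable_nat_add_iff 1).mpr hgeom
    refine h1.congr fun k => ?_
    rw [pow_succ]
    field_simp
  have hSq0 : 0 ≤ Sq := by
    rw [hSqdef]
    refine tsum_nonneg fun k => ?_
    positivity
  have htailb : ∀ n : ℕ, 1 ≤ n →
      |∑' m, term (m + n)| ≤ (C0 / lam1) * Sq * ((n : ℝ) ^ (L - 2) * q ^ n) := by
    intro n hn
    have hsummand : ∀ m : ℕ, |term (m + n)|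
        ≤ (C0 / lam1) * ((n : ℝ) ^ (L - 2) * q ^ n) * (((m + 1 : ℕ) : ℝ) ^ (L - 2) * q ^ m) := by
      intro m
      have h1 := htermb (m + n) (by omega)
      refine le_trans h1 ?_
      have h2 : ((m + n : ℕ) : ℝ) ^ (L - 2) ≤ ((n : ℝ) * ((m + 1 : ℕ) : ℝ)) ^ (L - 2) := by
        refine pow_le_pow_left₀ (by positivity) ?_ _
        push_cast
        nlinarith [(Nat.one_le_cast (α := ℝ)).mpr hn, Nat.cast_nonneg (α := ℝ) m]
      have h3 : q ^ (m + n) = q ^ n * q ^ m := by rw [pow_add]; ring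
      calc C0 / lam1 * (((m + n : ℕ) : ℝ) ^ (L - 2) * q ^ (m + n))
          ≤ C0 / lam1 * (((n : ℝ) * ((m + 1 : ℕ) : ℝ)) ^ (L - 2) * q ^ (m + n)) := by
            refine mul_le_mul_of_nonneg_left (mul_le_mul_of_nonneg_right h2 (by positivity)) ?_
            positivity
        _ = C0 / lam1 * ((n : ℝ) ^ (L - 2) * q ^ n) * (((m + 1 : ℕ) : ℝ) ^ (L - 2) * q ^ m) := by
            rw [mul_pow, h3]
            ring
    have hsumm : Summable (fun m => term (m + n)) := (summable_nat_add_iff n).mpr hsumterm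
    have habs : Summable (fun m => |term (m + n)|) := summable_abs_iff.mpr hsumm
    have hrhs : Summable (fun m : ℕ =>
        (C0 / lam1) * ((n : ℝ) ^ (L - 2) * q ^ n) * (((m + 1 : ℕ) : ℝ) ^ (L - 2) * q ^ m)) :=
      hshift.mul_left _
    calc |∑' m, term (m + n)| ≤ ∑' m, |term (m + n)| := by
          have := norm_tsum_le_tsum_norm (f := fun m => term (m + n)) (by simpa [Real.norm_eq_abs] using habs)
          simpa [Real.norm_eq_abs] using this
      _ ≤ ∑' m : ℕ, (C0 / lam1) * ((n : ℝ) ^ (L - 2) * q ^ n) * (((m + 1 : ℕ) : ℝ) ^ (L - 2) * q ^ m) :=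
          Summable.tsum_le_tsum hsummand habs hrhs
      _ = (C0 / lam1) * ((n : ℝ) ^ (L - 2) * q ^ n) * Sq := by
          rw [tsum_mul_left, hSqdef]
      _ = (C0 / lam1) * Sq * ((n : ℝ) ^ (L - 2) * q ^ n) := by ring
  -- main distance bound
  have hqlam : ∀ n : ℕ, q ^ n * lam1 ^ n = r ^ n := by
    intro n
    rw [hqdef, div_pow]
    field_simp
  have hmain : ∀ n : ℕ, 1 ≤ n →
      |JR n - B * lam1 ^ n| ≤ ((C0 / lam1) * Sq) * (n : ℝ) ^ (L - 2) * r ^ n := by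
    intro n hn
    have h1 : JR n - B * lam1 ^ n = -((B - JR n / lam1 ^ n) * lam1 ^ n) := by
      have h2 : lam1 ^ n ≠ 0 := ne_of_gt (pow_pos hlam1 _)
      field_simp
      ring
    rw [h1, abs_neg, abs_mul, abs_of_pos (pow_pos hlam1 n), htail n]
    calc |∑' m, term (m + n)| * lam1 ^ n
        ≤ (C0 / lam1) * Sq * ((n : ℝ) ^ (L - 2) * q ^ n) * lam1 ^ n := by
          exact mul_le_mul_of_nonneg_right (htailb n hn) (le_of_lt (pow_pos hlam1 n))
      _ = ((C0 / lam1) * Sq) * (n : ℝ) ^ (L - 2) * (q ^ n * lam1 ^ n) := by ring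
      _ = ((C0 / lam1) * Sq) * (n : ℝ) ^ (L - 2) * r ^ n := by rw [hqlam n]
  -- lower bound for JR and positivity of B
  have hrootR : lam1 ^ L = ∑ i ∈ Finset.Icc 1 L, (c i : ℝ) * lam1 ^ (L - i) := by
    have h := hroot1
    rw [charFun', sub_eq_zero] at h
    have h2 : (((lam1 ^ L : ℝ)) : ℂ) = ((∑ i ∈ Finset.Icc 1 L, (c i : ℝ) * lam1 ^ (L - i) : ℝ) : ℂ) := by
      push_cast
      exact h
    exact_mod_cast h2
  set a : ℝ := 1 / (max 1 lam1) ^ L with hadef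
  have hmax1 : (1 : ℝ) ≤ max 1 lam1 := le_max_left _ _
  have ha0 : 0 < a := by
    rw [hadef]
    positivity
  have hlower : ∀ n, a * lam1 ^ n ≤ JR n := by
    intro n
    induction n using Nat.strong_induction_on with
    | _ n ih =>
    by_cases hnL : n < L
    · have h1 : lam1 ^ n ≤ (max 1 lam1) ^ L := by
        calc lam1 ^ n ≤ (max 1 lam1) ^ n :=
              pow_le_pow_left₀ hlam1.le (le_max_right _ _) n
          _ ≤ (max 1 lam1) ^ L := pow_le_pow_right₀ hmax1 (by omega)
      have h2 : a * lam1 ^ n ≤ 1 := by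
        rw [hadef, div_mul_eq_mul_div, one_mul, div_le_one (by positivity)]
        exact h1
      exact le_trans h2 (hJ1 n)
    · push_neg at hnL
      obtain ⟨m, rfl⟩ : ∃ m, n = m + L := ⟨n - L, by omega⟩
      rw [hrec m]
      have hstep : ∀ i ∈ Finset.Icc 1 L, a * (lam1 ^ (m + L - i)) * (c i : ℝ)
          ≤ (c i : ℝ) * JR (m + L - i) := by
        intro i hi
        rw [Finset.mem_Icc] at hi
        have := ih (m + L - i) (by omega)
        calc a * lam1 ^ (m + L - i) * (c i : ℝ) = (c i : ℝ) * (a * lam1 ^ (m + L - i)) := by ring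
          _ ≤ (c i : ℝ) * JR (m + L - i) :=
            mul_le_mul_of_nonneg_left this (Nat.cast_nonneg _)
      calc a * lam1 ^ (m + L)
          = ∑ i ∈ Finset.Icc 1 L, a * lam1 ^ (m + L - i) * (c i : ℝ) := by
            have he : ∀ i ∈ Finset.Icc 1 L, a * lam1 ^ (m + L - i) * (c i : ℝ)
                = a * lam1 ^ m * ((c i : ℝ) * lam1 ^ (L - i)) := by
              intro i hi
              rw [Finset.mem_Icc] at hi
              rw [show m + L - i = m + (L - i) by omega, pow_add]
              ring
            rw [Finset.sum_congr rfl he, ← Finset.mul_sum, ← hrootR, pow_add]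
            ring
        _ ≤ ∑ i ∈ Finset.Icc 1 L, (c i : ℝ) * JR (m + L - i) := Finset.sum_le_sum hstep
  -- B ≥ a
  have hBa : a ≤ B := by
    have hten : Filter.Tendsto (fun n : ℕ => a - ((C0 / lam1) * Sq) * ((n : ℝ) ^ (L - 2) * q ^ n))
        Filter.atTop (nhds a) := by
      have h0 := tendsto_pow_const_mul_const_pow_of_lt_one (L - 2) hq0.le hq1
      have := h0.const_mul ((C0 / lam1) * Sq)
      have hc : Filter.Tendsto (fun _ : ℕ => a) Filter.atTop (nhds a) := tendsto_const_nhds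
      simpa using hc.sub this
    refine le_of_tendsto hten ?_
    filter_upwards [Filter.eventually_ge_atTop 1] with n hn
    have h1 := hmain n hn
    have h2 := hlower n
    have h3 : JR n - B * lam1 ^ n ≤ ((C0 / lam1) * Sq) * (n : ℝ) ^ (L - 2) * r ^ n :=
      le_trans (le_abs_self _) h1
    have h4 : r ^ n = q ^ n * lam1 ^ n := (hqlam n).symm
    have h5 : (a - B) * lam1 ^ n ≤ ((C0 / lam1) * Sq) * ((n : ℝ) ^ (L - 2) * q ^ n) * lam1 ^ n := by
      rw [h4] at h3
      nlinarith [pow_pos hlam1 n]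
    have h6 : a - B ≤ ((C0 / lam1) * Sq) * ((n : ℝ) ^ (L - 2) * q ^ n) :=
      le_of_mul_le_mul_right h5 (pow_pos hlam1 n)
    linarith
  exact ⟨B, lt_of_lt_of_le ha0 hBa, (C0 / lam1) * Sq, hmain⟩

end SLAux


namespace SLAux

lemma J_rec (L : ℕ) (c : ℕ → ℕ) (hL : 1 ≤ L) (n : ℕ) :
    J L c (n + L) = ∑ s ∈ Finset.Icc 1 L, c s * J L c (n + L - s) := by
  obtain ⟨m, hm⟩ : ∃ m, n + L = m + 1 := ⟨n + L - 1, by omega⟩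
  rw [hm, J_succ]
  rw [min_eq_left (by omega)]

end SLAux

theorem numSuperLegal_binet
    (L : ℕ) (c G : ℕ → ℕ)
    (hL : 1 ≤ L) (hc1 : 1 ≤ c 1) (hcL : 1 ≤ c L)
    (hGpos : ∀ i, 1 ≤ i → 1 ≤ G i)
    (hGrec : ∀ n, L ≤ n → G (n + 1) = ∑ i ∈ Finset.Icc 1 L, c i * G (n + 1 - i))
    (lam1 : ℝ) (hlam1 : 0 < lam1) (hroot1 : charFun L c lam1 = 0)
    (hdom : ∀ z : ℂ, charFun L c z = 0 → z ≠ (lam1 : ℂ) → ‖z‖ < lam1)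
    (lam2 : ℂ) (hroot2 : charFun L c lam2 = 0) (hne2 : lam2 ≠ (lam1 : ℂ))
    (hsec : ∀ z : ℂ, charFun L c z = 0 → z ≠ (lam1 : ℂ) → ‖z‖ ≤ ‖lam2‖) :
    ∃ B : ℝ, 0 < B ∧
      (fun n => (numSuperLegal L c n : ℝ) - B * lam1 ^ n)
        =O[Filter.atTop] (fun n => (n : ℝ) ^ (L - 2) * ‖lam2‖ ^ n) := by
  classical
  have hcc : ∀ z : ℂ, SLAux.charFun' L c z = charFun L c z := fun z => rfl
  by_cases hL1 : L = 1
  · exfalso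
    subst hL1
    have h1 : ((lam1 : ℂ)) = ((c 1 : ℕ) : ℂ) := by
      have h := hroot1
      rw [charFun] at h
      simp only [Finset.Icc_self, Finset.sum_singleton, Nat.sub_self, pow_zero, mul_one,
        pow_one] at h
      linear_combination h
    have h2 : lam2 = ((c 1 : ℕ) : ℂ) := by
      have h := hroot2
      rw [charFun] at h
      simp only [Finset.Icc_self, Finset.sum_singleton, Nat.sub_self, pow_zero, mul_one,
        pow_one] at h
      linear_combination h
    exact hne2 (h2.trans h1.symm)
  · have hL2 : 2 ≤ L := by omega
    have hJ1 : ∀ n, (1 : ℝ) ≤ ((SLAux.J L c n : ℕ) : ℝ) := by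
      intro n
      exact_mod_cast SLAux.J_pos L c hL hc1 n
    have hrecJR : ∀ n, ((SLAux.J L c (n + L) : ℕ) : ℝ)
        = ∑ i ∈ Finset.Icc 1 L, (c i : ℝ) * ((SLAux.J L c (n + L - i) : ℕ) : ℝ) := by
      intro n
      rw [SLAux.J_rec L c hL n]
      push_cast
      rfl
    obtain ⟨B, hB, C1, hC1⟩ := SLAux.analytic L c hL2 hc1 hcL
      (fun n => ((SLAux.J L c n : ℕ) : ℝ)) hJ1 hrecJR lam1 hlam1
      ((hcc (lam1 : ℂ)) ▸ hroot1)
      (fun z hz => hdom z ((hcc z) ▸ hz))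
      lam2 ((hcc lam2) ▸ hroot2) hne2
      (fun z hz => hsec z ((hcc z) ▸ hz))
    refine ⟨B, hB, ?_⟩
    rw [Asymptotics.isBigO_iff]
    refine ⟨C1, ?_⟩
    filter_upwards [Filter.eventually_ge_atTop 1] with n hn
    rw [SLAux.numSuperLegal_eq_J L c hL hc1 n hn]
    rw [Real.norm_eq_abs, Real.norm_eq_abs]
    have h := hC1 n hn
    have hnn : (0 : ℝ) ≤ (n : ℝ) ^ (L - 2) * ‖lam2‖ ^ n := by positivity
    rw [abs_of_nonneg hnn]
    calc |((SLAux.J L c n : ℕ) : ℝ) - B * lam1 ^ n|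
        ≤ C1 * (n : ℝ) ^ (L - 2) * ‖lam2‖ ^ n := h
      _ = C1 * ((n : ℝ) ^ (L - 2) * ‖lam2‖ ^ n) := by ring
end

section
/- Zeckendorf's theorem: with the Fibonacci numbers defined by F_1 = 1, F_2 = 2, and F_{n+1} = F_n + F_{n-1}, every positive integer m can be written uniquely as a sum of nonconsecutive Fibonacci numbers; that is, there is a unique finite set of indices I with no two consecutive indices such that m = Σ_{i ∈ I} F_i. -/
open Finset Filter Asymptotics

open scoped Classical

/-- The Fibonacci numbers re-indexed so that `fibZ 1 = 1`, `fibZ 2 = 2`, and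
`fibZ (n + 1) = fibZ n + fibZ (n - 1)`. -/
def fibZ (n : ℕ) : ℕ := Nat.fib (n + 1)

lemma fibZ_pos (n : ℕ) : 0 < fibZ n := Nat.fib_pos.2 (Nat.succ_pos n)

lemma fibZ_mono : Monotone fibZ := fun a b h => Nat.fib_mono (by omega)

lemma fibZ_rec (k : ℕ) (hk : 1 ≤ k) : fibZ (k + 1) = fibZ k + fibZ (k - 1) := by
  match k, hk with
  | 1, _ => rfl
  | (j+2), _ =>
    show Nat.fib (j + 2 + 2) = Nat.fib (j + 3) + Nat.fib (j + 2)
    rw [Nat.fib_add_two, show j + 2 + 1 = j + 3 from rfl]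
    omega

lemma le_fibZ : ∀ n, n ≤ fibZ n := by
  intro n
  induction n using Nat.strong_induction_on with
  | _ n IH =>
    match n with
    | 0 => exact Nat.zero_le _
    | 1 => exact le_refl _
    | (j+2) =>
      have h := fibZ_rec (j+1) (by omega)
      simp only [show j + 1 + 1 = j + 2 from rfl, show j + 1 - 1 = j from rfl] at h
      have h1 := IH (j+1) (by omega)
      have h2 := fibZ_pos j
      omega

lemma sum_lt_fibZ : ∀ k : ℕ, ∀ I : Finset ℕ,
    (∀ i ∈ I, 1 ≤ i) → (∀ i ∈ I, i + 1 ∉ I) → (∀ i ∈ I, i ≤ k) →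
    ∑ i ∈ I, fibZ i < fibZ (k + 1) := by
  intro k
  induction k using Nat.strong_induction_on with
  | _ k IH =>
    intro I h1 h2 h3
    by_cases hk : k ∈ I
    · have hk1 : 1 ≤ k := h1 k hk
      have hI' : ∀ i ∈ I.erase k, i ≤ k - 2 := by
        intro i hi
        have hik := h3 i (Finset.mem_of_mem_erase hi)
        have hne := Finset.ne_of_mem_erase hi
        have hne2 : i ≠ k - 1 := by
          intro h
          exact h2 i (Finset.mem_of_mem_erase hi) (by rw [h, Nat.sub_add_cancel hk1]; exact hk)
        omega
      have hlt : ∑ i ∈ I.erase k, fibZ i < fibZ (k - 2 + 1) :=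
        IH (k - 2) (by omega) _ (fun i hi => h1 i (Finset.mem_of_mem_erase hi))
          (fun i hi h => h2 i (Finset.mem_of_mem_erase hi) (Finset.mem_of_mem_erase h))
          hI'
      have hsum : ∑ i ∈ I, fibZ i = fibZ k + ∑ i ∈ I.erase k, fibZ i :=
        (Finset.add_sum_erase _ _ hk).symm
      have hmono : fibZ (k - 2 + 1) ≤ fibZ (k - 1) := by
        match k, hk1 with
        | 1, _ => decide
        | (j+2), _ => exact fibZ_mono (by omega)
      rw [fibZ_rec k hk1]
      omega
    · match k with
      | 0 =>
        have hI : I = ∅ := by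
          rw [Finset.eq_empty_iff_forall_notMem]
          intro i hi
          have := h1 i hi
          have := h3 i hi
          omega
        simp [hI]
        exact fibZ_pos 1
      | (j+1) =>
        have h := IH j (by omega) I h1 h2 (fun i hi => by
          have := h3 i hi
          have : i ≠ j + 1 := fun h => hk (h ▸ hi)
          omega)
        exact h.trans_le (fibZ_mono (by omega))

lemma exists_rep : ∀ m : ℕ, ∃ I : Finset ℕ,
    (∀ i ∈ I, 1 ≤ i) ∧ (∀ i ∈ I, i + 1 ∉ I) ∧ m = ∑ i ∈ I, fibZ i := by
  intro m
  induction m using Nat.strong_induction_on with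
  | _ m IH =>
    rcases Nat.eq_zero_or_pos m with rfl | hm
    · exact ⟨∅, by simp⟩
    · set k := Nat.findGreatest (fun k => fibZ k ≤ m) m with hkdef
      have hk1 : 1 ≤ k := Nat.le_findGreatest hm (by show fibZ 1 ≤ m; simp [fibZ]; omega)
      have hkle : fibZ k ≤ m :=
        Nat.findGreatest_spec (P := fun k => fibZ k ≤ m) hm (by show fibZ 1 ≤ m; simp [fibZ]; omega)
      have hklt : m < fibZ (k + 1) := by
        by_cases hc : k + 1 ≤ m
        · have := Nat.findGreatest_is_greatest (P := fun k => fibZ k ≤ m)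
            (show k < k + 1 by omega) hc
          omega
        · have := le_fibZ (k + 1)
          omega
      have hrec := fibZ_rec k hk1
      have hm'lt : m - fibZ k < fibZ (k - 1) := by omega
      obtain ⟨I', hI1, hI2, hI3⟩ := IH (m - fibZ k) (by have := fibZ_pos k; omega)
      have hbound : ∀ i ∈ I', i + 1 < k := by
        intro i hi
        by_contra hcon
        have h1 : fibZ (k - 1) ≤ fibZ i := fibZ_mono (by omega)
        have h2 : fibZ i ≤ ∑ j ∈ I', fibZ j :=
          Finset.single_le_sum (fun j _ => Nat.zero_le _) hi
        omega
      have hknotmem : k ∉ I' := fun h => by have := hbound k h; omega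
      refine ⟨insert k I', ?_, ?_, ?_⟩
      · intro i hi
        rcases Finset.mem_insert.1 hi with rfl | hi
        · exact hk1
        · exact hI1 i hi
      · intro i hi
        rcases Finset.mem_insert.1 hi with rfl | hi
        · intro hmem
          rcases Finset.mem_insert.1 hmem with h | h
          · omega
          · have := hbound _ h; omega
        · intro hmem
          rcases Finset.mem_insert.1 hmem with h | h
          · have := hbound i hi; omega
          · exact hI2 i hi h
      · rw [Finset.sum_insert hknotmem, ← hI3]
        omega

lemma uniq_rep : ∀ m : ℕ, ∀ I J : Finset ℕ,
    ((∀ i ∈ I, 1 ≤ i) ∧ (∀ i ∈ I, i + 1 ∉ I) ∧ m = ∑ i ∈ I, fibZ i) →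
    ((∀ i ∈ J, 1 ≤ i) ∧ (∀ i ∈ J, i + 1 ∉ J) ∧ m = ∑ i ∈ J, fibZ i) →
    I = J := by
  intro m
  induction m using Nat.strong_induction_on with
  | _ m IH =>
    intro I J ⟨hI1, hI2, hI3⟩ ⟨hJ1, hJ2, hJ3⟩
    rcases Nat.eq_zero_or_pos m with rfl | hm
    · have hIe : I = ∅ := by
        rw [Finset.eq_empty_iff_forall_notMem]
        intro i hi
        have h := Finset.single_le_sum (fun j _ => Nat.zero_le (fibZ j)) hi
        have := fibZ_pos i
        omega
      have hJe : J = ∅ := by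
        rw [Finset.eq_empty_iff_forall_notMem]
        intro i hi
        have h := Finset.single_le_sum (fun j _ => Nat.zero_le (fibZ j)) hi
        have := fibZ_pos i
        omega
      rw [hIe, hJe]
    · have hIne : I.Nonempty := by
        rcases Finset.eq_empty_or_nonempty I with rfl | h
        · simp at hI3; omega
        · exact h
      have hJne : J.Nonempty := by
        rcases Finset.eq_empty_or_nonempty J with rfl | h
        · simp at hJ3; omega
        · exact h
      set a := I.max' hIne with ha
      set b := J.max' hJne with hb
      have hale : fibZ a ≤ m := hI3 ▸
        Finset.single_le_sum (fun j _ => Nat.zero_le (fibZ j)) (I.max'_mem hIne)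
      have hble : fibZ b ≤ m := hJ3 ▸
        Finset.single_le_sum (fun j _ => Nat.zero_le (fibZ j)) (J.max'_mem hJne)
      have halt : m < fibZ (a + 1) := hI3 ▸
        sum_lt_fibZ a I hI1 hI2 (fun i hi => Finset.le_max' I i hi)
      have hblt : m < fibZ (b + 1) := hJ3 ▸
        sum_lt_fibZ b J hJ1 hJ2 (fun i hi => Finset.le_max' J i hi)
      have hab : a = b := by
        by_contra hne
        rcases Nat.lt_or_ge a b with h | h
        · have : fibZ (a + 1) ≤ fibZ b := fibZ_mono (by omega)
          omega
        · have h' : b < a := by omega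
          have : fibZ (b + 1) ≤ fibZ a := fibZ_mono (by omega)
          omega
      have hmemI : a ∈ I := I.max'_mem hIne
      have hmemJ : a ∈ J := hab ▸ J.max'_mem hJne
      have hsumI : m - fibZ a = ∑ i ∈ I.erase a, fibZ i := by
        have := (Finset.add_sum_erase _ fibZ hmemI).symm
        omega
      have hsumJ : m - fibZ a = ∑ i ∈ J.erase a, fibZ i := by
        have := (Finset.add_sum_erase _ fibZ hmemJ).symm
        omega
      have hkey : I.erase a = J.erase a := by
        refine IH (m - fibZ a) (by have := fibZ_pos a; omega) _ _
          ⟨fun i hi => hI1 i (Finset.mem_of_mem_erase hi),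
           fun i hi h => hI2 i (Finset.mem_of_mem_erase hi) (Finset.mem_of_mem_erase h),
           hsumI⟩
          ⟨fun i hi => hJ1 i (Finset.mem_of_mem_erase hi),
           fun i hi h => hJ2 i (Finset.mem_of_mem_erase hi) (Finset.mem_of_mem_erase h),
           hsumJ⟩
      have : insert a (I.erase a) = insert a (J.erase a) := by rw [hkey]
      rwa [Finset.insert_erase hmemI, Finset.insert_erase hmemJ] at this

theorem zeckendorf :
    ∀ m : ℕ, 0 < m →
      ∃! I : Finset ℕ, (∀ i ∈ I, 1 ≤ i) ∧ (∀ i ∈ I, i + 1 ∉ I) ∧ m = ∑ i ∈ I, fibZ i := by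
  intro m _
  obtain ⟨I, hI⟩ := exists_rep m
  exact ⟨I, hI, fun J hJ => uniq_rep m J I hJ hI⟩
end
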